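/- arXiv:1505.00469 — 16 statements merged into one kernel-verified Lean document; each statement's English description precedes it below -/
import Mathlib

section
/- Let A be an associative algebra over a field k and let α, β : A → A be two commuting algebra endomorphisms. Define a new multiplication on A by a * b = α(a)β(b). Then (A, *, α, β) is a BiHom-associative algebra, i.e., α, β are multiplicative with respect to *, and α(a) * (b * c) = (a * b) * β(c) for all a, b, c ∈ A. -/
/-- If `A` is an associative algebra over a field `k` and `α, β : A → A` are two
commuting algebra endomorphisms, then `A` with the multiplication `a * b := α a * β b` and
structure maps `α, β` is a BiHom-associative algebra. -/
theorem yau_twist_is_biHom_associative (k A : Type*) [Field k] [Ring A] [Algebra k A]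
    (α β : A →ₐ[k] A) (hcomm : ∀ a : A, α (β a) = β (α a)) :
    (∀ a : A, α (β a) = β (α a)) ∧
    (∀ a b : A, α (α a * β b) = α (α a) * β (α b)) ∧
    (∀ a b : A, β (α a * β b) = α (β a) * β (β b)) ∧
    (∀ a b c : A, α (α a) * β (α b * β c) = α (α a * β b) * β (β c)) := by
  refine ⟨hcomm, fun a b => by simp [map_mul, hcomm], fun a b => by simp [map_mul, hcomm],
    fun a b c => by simp [map_mul, hcomm, mul_assoc]⟩
end

section
/- Let (A, μ, α, β) be a BiHom-associative algebra with α and β bijective. Then the multiplication μ ∘ (α⁻¹ ⊗ β⁻¹) on A is associative in the usual sense. -/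
/-- If `(A, μ, α, β)` is a BiHom-associative algebra with `α` and `β` bijective
(here given as linear automorphisms), then the multiplication `a ∘ b := μ (α⁻¹ a) (β⁻¹ b)`
is associative in the usual sense. -/
theorem biHom_untwist_is_associative (k A : Type*) [Field k] [AddCommGroup A] [Module k A]
    (μ : A →ₗ[k] A →ₗ[k] A) (α β : A ≃ₗ[k] A)
    (hcomm : ∀ a : A, α (β a) = β (α a))
    (hα : ∀ a b : A, α (μ a b) = μ (α a) (α b))
    (hβ : ∀ a b : A, β (μ a b) = μ (β a) (β b))
    (hassoc : ∀ a b c : A, μ (α a) (μ b c) = μ (μ a b) (β c)) :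
    ∀ a b c : A,
      μ (α.symm (μ (α.symm a) (β.symm b))) (β.symm c) =
      μ (α.symm a) (β.symm (μ (α.symm b) (β.symm c))) := by
  have hα' : ∀ a b : A, α.symm (μ a b) = μ (α.symm a) (α.symm b) := by
    intro a b
    have := hα (α.symm a) (α.symm b)
    simp only [LinearEquiv.apply_symm_apply] at this
    rw [← this, LinearEquiv.symm_apply_apply]
  have hβ' : ∀ a b : A, β.symm (μ a b) = μ (β.symm a) (β.symm b) := by
    intro a b
    have := hβ (β.symm a) (β.symm b)
    simp only [LinearEquiv.apply_symm_apply] at this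
    rw [← this, LinearEquiv.symm_apply_apply]
  have hcomm' : ∀ a : A, α.symm (β.symm a) = β.symm (α.symm a) := by
    intro a
    have := hcomm (β.symm (α.symm a))
    simp only [LinearEquiv.apply_symm_apply] at this
    conv_lhs => rw [this]
    simp
  intro a b c
  rw [hα', hβ', hcomm']
  have h := hassoc (α.symm (α.symm a)) (β.symm (α.symm b)) (β.symm (β.symm c))
  simp only [LinearEquiv.apply_symm_apply] at h
  exact h.symm
end

section
/- Let (D, μ, α̃, β̃) be a BiHom-associative algebra and α, β : D → D two multiplicative linear maps such that any two of the maps α̃, β̃, α, β commute. Then (D, μ ∘ (α ⊗ β), α̃ ∘ α, β̃ ∘ β) is also a BiHom-associative algebra. -/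
/-- If `(D, μ, α̃, β̃)` is a BiHom-associative algebra and `α, β : D → D` are two
multiplicative linear maps such that any two of `α̃, β̃, α, β` commute, then
`(D, μ ∘ (α ⊗ β), α̃ ∘ α, β̃ ∘ β)` is also a BiHom-associative algebra. -/
theorem biHom_yau_twist (k D : Type*) [Field k] [AddCommGroup D] [Module k D]
    (μ : D →ₗ[k] D →ₗ[k] D) (αt βt α β : D →ₗ[k] D)
    (h1 : ∀ a : D, αt (βt a) = βt (αt a))
    (h2 : ∀ a : D, αt (α a) = α (αt a))
    (h3 : ∀ a : D, αt (β a) = β (αt a))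
    (h4 : ∀ a : D, βt (α a) = α (βt a))
    (h5 : ∀ a : D, βt (β a) = β (βt a))
    (h6 : ∀ a : D, α (β a) = β (α a))
    (hαt : ∀ a b : D, αt (μ a b) = μ (αt a) (αt b))
    (hβt : ∀ a b : D, βt (μ a b) = μ (βt a) (βt b))
    (hα : ∀ a b : D, α (μ a b) = μ (α a) (α b))
    (hβ : ∀ a b : D, β (μ a b) = μ (β a) (β b))
    (hassoc : ∀ a b c : D, μ (αt a) (μ b c) = μ (μ a b) (βt c)) :
    (∀ a : D, αt (α (βt (β a))) = βt (β (αt (α a)))) ∧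
    (∀ a b : D, αt (α (μ (α a) (β b))) = μ (α (αt (α a))) (β (αt (α b)))) ∧
    (∀ a b : D, βt (β (μ (α a) (β b))) = μ (α (βt (β a))) (β (βt (β b)))) ∧
    (∀ a b c : D,
      μ (α (αt (α a))) (β (μ (α b) (β c))) = μ (α (μ (α a) (β b))) (β (βt (β c)))) := by
  refine ⟨fun a => ?_, fun a b => ?_, fun a b => ?_, fun a b c => ?_⟩ <;>
    simp only [hα, hβ, hαt, hβt, ← h1, ← h2, ← h3, ← h4, ← h5, h6, hassoc]
end

section
/- Let (A, μ, α, β) be a BiHom-associative algebra with α and β bijective. Define the bracket [a, a'] = a a' - (α⁻¹β(a'))(αβ⁻¹(a)). Then (A, [-,-], α, β) is a BiHom-Lie algebra. -/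
/-- If `(A, μ, α, β)` is a BiHom-associative algebra with `α, β` bijective, then
`A` with the bracket `[a, a'] := a a' - (α⁻¹β(a'))(αβ⁻¹(a))` and structure maps `α, β` is a
BiHom-Lie algebra. -/
theorem biHom_commutator_is_biHom_lie (k A : Type*) [Field k] [AddCommGroup A] [Module k A]
    (μ : A →ₗ[k] A →ₗ[k] A) (α β : A ≃ₗ[k] A)
    (hcomm : ∀ a : A, α (β a) = β (α a))
    (hα : ∀ a b : A, α (μ a b) = μ (α a) (α b))
    (hβ : ∀ a b : A, β (μ a b) = μ (β a) (β b))
    (hassoc : ∀ a b c : A, μ (α a) (μ b c) = μ (μ a b) (β c)) :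
    ∀ br : A → A → A, (br = fun a b => μ a b - μ (α.symm (β b)) (α (β.symm a))) →
      ((∀ a : A, α (β a) = β (α a)) ∧
       (∀ a b : A, α (br a b) = br (α a) (α b)) ∧
       (∀ a b : A, β (br a b) = br (β a) (β b)) ∧
       (∀ a b : A, br (β a) (α b) = - br (β b) (α a)) ∧
       (∀ a b c : A,
         br (β (β a)) (br (β b) (α c)) + br (β (β b)) (br (β c) (α a)) +
           br (β (β c)) (br (β a) (α b)) = 0)) := by
  intro br hbr
  subst hbr
  have hc1 : ∀ a, α.symm (β a) = β (α.symm a) := by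
    intro a; apply α.injective
    rw [α.apply_symm_apply, hcomm, α.apply_symm_apply]
  have hc2 : ∀ a, α (β.symm a) = β.symm (α a) := by
    intro a; apply β.injective
    rw [β.apply_symm_apply, ← hcomm, β.apply_symm_apply]
  have hαs : ∀ a b, α.symm (μ a b) = μ (α.symm a) (α.symm b) := by
    intro a b; apply α.injective
    rw [α.apply_symm_apply, hα, α.apply_symm_apply, α.apply_symm_apply]
  refine ⟨hcomm, ?_, ?_, ?_, ?_⟩
  · intro a b
    simp only [map_sub, hα, hc1, hc2, hcomm, α.apply_symm_apply, α.symm_apply_apply]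
  · intro a b
    simp only [map_sub, hβ, hc1, ← hcomm, β.apply_symm_apply, β.symm_apply_apply]
  · intro a b
    simp only [hc1, α.symm_apply_apply, β.symm_apply_apply]
    abel
  · intro a b c
    have hP : ∀ x y z : A, μ (μ (β (β (α.symm x))) (β y)) (β (α z)) =
        μ (β (β x)) (μ (β y) (α z)) := by
      intro x y z
      rw [← hc1, ← hc1, ← hassoc, α.apply_symm_apply]
    simp only [hcomm, α.symm_apply_apply, β.symm_apply_apply, map_sub,
      LinearMap.sub_apply, hβ, hαs, hc1, hc2, β.apply_symm_apply, α.apply_symm_apply]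
    simp only [hP]
    abel
end

section
/- Let (L, [-,-]) be a Lie algebra over a field k and α, β : L → L two commuting linear maps such that α([a,b]) = [α(a), α(b)] and β([a,b]) = [β(a), β(b)] for all a, b ∈ L. Define {a, b} = [α(a), β(b)]. Then (L, {-,-}, α, β) is a BiHom-Lie algebra. -/
/-- If `(L, [-,-])` is a Lie algebra over a field `k` and `α, β : L → L` are two
commuting linear maps preserving the bracket, then `L` with the bracket
`{a, b} := [α a, β b]` and structure maps `α, β` is a BiHom-Lie algebra. -/
theorem lie_yau_twist_is_biHom_lie (k L : Type*) [Field k] [LieRing L] [LieAlgebra k L]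
    (α β : L →ₗ[k] L)
    (hcomm : ∀ a : L, α (β a) = β (α a))
    (hα : ∀ a b : L, α ⁅a, b⁆ = ⁅α a, α b⁆)
    (hβ : ∀ a b : L, β ⁅a, b⁆ = ⁅β a, β b⁆) :
    (∀ a b : L, α ⁅α a, β b⁆ = ⁅α (α a), β (α b)⁆) ∧
    (∀ a b : L, β ⁅α a, β b⁆ = ⁅α (β a), β (β b)⁆) ∧
    (∀ a b : L, ⁅α (β a), β (α b)⁆ = - ⁅α (β b), β (α a)⁆) ∧
    (∀ a b c : L,
      ⁅α (β (β a)), β ⁅α (β b), β (α c)⁆⁆ + ⁅α (β (β b)), β ⁅α (β c), β (α a)⁆⁆ +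
        ⁅α (β (β c)), β ⁅α (β a), β (α b)⁆⁆ = 0) := by
  refine ⟨fun a b => by rw [hα, hcomm], fun a b => by rw [hβ, hcomm], fun a b => by
    rw [hcomm, hcomm, ← lie_skew], fun a b c => by
    simp only [hβ, hcomm]
    exact lie_jacobi (β (β (α a))) (β (β (α b))) (β (β (α c)))⟩
end

section
/- Let (E, μ, 1_E) be an associative unital algebra and u, v ∈ E two invertible commuting elements. Define α̃(a) = u a u⁻¹, β̃(a) = v a v⁻¹, and a * b = u a u⁻¹ b v⁻¹. Then (E, *, α̃, β̃) is a unital BiHom-associative algebra with unit v. -/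
/-- For an associative unital algebra `E` and invertible commuting elements
`u, v ∈ E`, setting `α̃(a) = u a u⁻¹`, `β̃(a) = v a v⁻¹` and `a * b = u a u⁻¹ b v⁻¹`,
`(E, *, α̃, β̃)` is a unital BiHom-associative algebra with unit `v`. -/
theorem conjugation_biHom_algebra (E : Type*) [Ring E] (u v : Eˣ)
    (huv : (u : E) * v = (v : E) * u) :
    ∀ f g : E → E, ∀ m : E → E → E,
      (f = fun a => (u : E) * a * (↑u⁻¹ : E)) →
      (g = fun a => (v : E) * a * (↑v⁻¹ : E)) →
      (m = fun a b => (u : E) * a * (↑u⁻¹ : E) * b * (↑v⁻¹ : E)) →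
      ((∀ a : E, f (g a) = g (f a)) ∧
       (∀ a b : E, f (m a b) = m (f a) (f b)) ∧
       (∀ a b : E, g (m a b) = m (g a) (g b)) ∧
       (∀ a b c : E, m (f a) (m b c) = m (m a b) (g c)) ∧
       f (v : E) = (v : E) ∧ g (v : E) = (v : E) ∧
       (∀ a : E, m a (v : E) = f a) ∧ (∀ a : E, m (v : E) a = g a)) := by
  intro f g m hf hg hm
  subst hf hg hm
  have h : Commute (u : E) (v : E) := huv
  have h1 : Commute (v : E) (u : E) := h.symm
  have h2 : Commute ((↑v⁻¹ : E)) (u : E) := h1.units_inv_left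
  have h3 : Commute ((v : E)) ((↑u⁻¹ : E)) := h1.units_inv_right
  have h4 : Commute ((↑v⁻¹ : E)) ((↑u⁻¹ : E)) := h2.units_inv_right
  have c1 : ∀ x : E, (v : E) * ((u : E) * x) = (u : E) * ((v : E) * x) :=
    fun x => (mul_assoc _ _ _).symm.trans (by rw [h1.eq, mul_assoc])
  have c2 : ∀ x : E, (↑v⁻¹ : E) * ((u : E) * x) = (u : E) * ((↑v⁻¹ : E) * x) :=
    fun x => (mul_assoc _ _ _).symm.trans (by rw [h2.eq, mul_assoc])
  have c3 : ∀ x : E, (v : E) * ((↑u⁻¹ : E) * x) = (↑u⁻¹ : E) * ((v : E) * x) :=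
    fun x => (mul_assoc _ _ _).symm.trans (by rw [h3.eq, mul_assoc])
  have c4 : ∀ x : E, (↑v⁻¹ : E) * ((↑u⁻¹ : E) * x) = (↑u⁻¹ : E) * ((↑v⁻¹ : E) * x) :=
    fun x => (mul_assoc _ _ _).symm.trans (by rw [h4.eq, mul_assoc])
  refine ⟨?_, ?_, ?_, ?_, ?_, ?_, ?_, ?_⟩ <;>
    intros <;>
    simp only [mul_assoc, Units.mul_inv_cancel_left, Units.inv_mul_cancel_left,
      c1, c2, c3, c4, h1.eq, h2.eq, h3.eq, h4.eq, Units.mul_inv, Units.inv_mul, mul_one, one_mul]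
end

section
/- Let (A, μ_A, α_A, β_A) be a BiHom-associative algebra with bijective structure maps and (M, α_M, β_M) a left A-module with action a·m. Define ρ : A → End(M) by ρ(a)(m) = a·m. Then (M, ρ, α_M, β_M) is a representation of the BiHom-Lie algebra L(A), i.e., ρ(α_A(a))∘α_M = α_M∘ρ(a), ρ(β_A(a))∘β_M = β_M∘ρ(a), and ρ([β_A(a), b])∘β_M = ρ(α_Aβ_A(a))∘ρ(b) - ρ(β_A(b))∘ρ(α_A(a)) for all a, b ∈ A. -/
/-- If `(A, μ, α, β)` is a BiHom-associative algebra with bijective structure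
maps and `(M, α_M, β_M)` is a left `A`-module with action `act`, then `ρ(a)(m) := act a m`
is a representation of the BiHom-Lie algebra `L(A)` (with bracket
`[a,b] = ab - (α⁻¹β(b))(αβ⁻¹(a))`). -/
theorem module_gives_lie_representation (k A M : Type*) [Field k]
    [AddCommGroup A] [Module k A] [AddCommGroup M] [Module k M]
    (μ : A →ₗ[k] A →ₗ[k] A) (α β : A ≃ₗ[k] A)
    (hcomm : ∀ a : A, α (β a) = β (α a))
    (hα : ∀ a b : A, α (μ a b) = μ (α a) (α b))
    (hβ : ∀ a b : A, β (μ a b) = μ (β a) (β b))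
    (hassoc : ∀ a b c : A, μ (α a) (μ b c) = μ (μ a b) (β c))
    (αM βM : M →ₗ[k] M) (act : A →ₗ[k] M →ₗ[k] M)
    (hMcomm : ∀ m : M, αM (βM m) = βM (αM m))
    (hactα : ∀ (a : A) (m : M), αM (act a m) = act (α a) (αM m))
    (hactβ : ∀ (a : A) (m : M), βM (act a m) = act (β a) (βM m))
    (hactassoc : ∀ (a b : A) (m : M), act (α a) (act b m) = act (μ a b) (βM m)) :
    (∀ (a : A) (m : M), act (α a) (αM m) = αM (act a m)) ∧
    (∀ (a : A) (m : M), act (β a) (βM m) = βM (act a m)) ∧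
    (∀ (a b : A) (m : M),
      act (μ (β a) b - μ (α.symm (β b)) (α (β.symm (β a)))) (βM m) =
        act (α (β a)) (act b m) - act (β b) (act (α a) m)) := by
  refine ⟨fun a m => (hactα a m).symm, fun a m => (hactβ a m).symm, fun a b m => ?_⟩
  have h1 := hactassoc (β a) b m
  have h2 := hactassoc (α.symm (β b)) (α a) m
  rw [α.apply_symm_apply] at h2
  rw [map_sub, LinearMap.sub_apply, ← h1, β.symm_apply_apply, ← h2]
end

section
/- Let (L, [-,-], α, β) be a BiHom-Lie algebra with α and β bijective, and (M, ρ, α_M, β_M) a representation of L, with α_M, β_M invertible, writing x·a for ρ(x)(a). Then L ⊕ M with structure maps α ⊕ α_M, β ⊕ β_M and bracket [(x,a), (y,b)] = ([x,y], x·b - α⁻¹β(y)·α_Mβ_M⁻¹(a)) is a BiHom-Lie algebra (the semidirect product). -/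
/-- Semidirect product of a BiHom-Lie algebra `(L, br, α, β)` (with `α, β`
bijective) and a representation `(M, ρ, α_M, β_M)` (with `α_M, β_M` invertible):
`L ⊕ M` with structure maps `α ⊕ α_M`, `β ⊕ β_M` and bracket
`[(x,a),(y,b)] = ([x,y], x·b - α⁻¹β(y)·α_M β_M⁻¹(a))` is a BiHom-Lie algebra. -/
theorem biHom_lie_semidirect_product (k L M : Type*) [Field k]
    [AddCommGroup L] [Module k L] [AddCommGroup M] [Module k M]
    (br : L →ₗ[k] L →ₗ[k] L) (α β : L ≃ₗ[k] L)
    (hcomm : ∀ x : L, α (β x) = β (α x))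
    (hα : ∀ x y : L, α (br x y) = br (α x) (α y))
    (hβ : ∀ x y : L, β (br x y) = br (β x) (β y))
    (hskew : ∀ x y : L, br (β x) (α y) = - br (β y) (α x))
    (hjac : ∀ x y z : L,
      br (β (β x)) (br (β y) (α z)) + br (β (β y)) (br (β z) (α x)) +
        br (β (β z)) (br (β x) (α y)) = 0)
    (ρ : L →ₗ[k] M →ₗ[k] M) (αM βM : M ≃ₗ[k] M)
    (hMcomm : ∀ m : M, αM (βM m) = βM (αM m))
    (hrep1 : ∀ (x : L) (m : M), ρ (α x) (αM m) = αM (ρ x m))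
    (hrep2 : ∀ (x : L) (m : M), ρ (β x) (βM m) = βM (ρ x m))
    (hrep3 : ∀ (x y : L) (m : M),
      ρ (br (β x) y) (βM m) = ρ (α (β x)) (ρ y m) - ρ (β y) (ρ (α x) m)) :
    ∀ Br : L × M → L × M → L × M,
    ∀ F G : L × M → L × M,
      (Br = fun p q =>
        (br p.1 q.1, ρ p.1 q.2 - ρ (α.symm (β q.1)) (αM (βM.symm p.2)))) →
      (F = fun p => (α p.1, αM p.2)) →
      (G = fun p => (β p.1, βM p.2)) →
      ((∀ p : L × M, F (G p) = G (F p)) ∧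
       (∀ p q : L × M, F (Br p q) = Br (F p) (F q)) ∧
       (∀ p q : L × M, G (Br p q) = Br (G p) (G q)) ∧
       (∀ p q : L × M, Br (G p) (F q) = - Br (G q) (F p)) ∧
       (∀ p q r : L × M,
         Br (G (G p)) (Br (G q) (F r)) + Br (G (G q)) (Br (G r) (F p)) +
           Br (G (G r)) (Br (G p) (F q)) = 0)) := by

  intro Br F G hBr hF hG
  subst hBr hF hG
  have lem1 : ∀ z : L, α.symm (β (α z)) = β z := by
    intro z; apply α.injective; rw [α.apply_symm_apply, hcomm]
  have lemc : ∀ z : L, β (α.symm z) = α.symm (β z) := by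
    intro z
    apply α.injective
    rw [hcomm, α.apply_symm_apply, α.apply_symm_apply]
  have lemα : ∀ u v : L, α.symm (br u v) = br (α.symm u) (α.symm v) := by
    intro u v
    apply α.injective
    rw [α.apply_symm_apply, hα, α.apply_symm_apply, α.apply_symm_apply]
  have lemMc : ∀ m : M, βM (αM (βM.symm m)) = αM m := by
    intro m; rw [← hMcomm, βM.apply_symm_apply]
  have lemMc2 : ∀ m : M, αM (βM.symm m) = βM.symm (αM m) := by
    intro m; apply βM.injective; rw [lemMc, βM.apply_symm_apply]
  have key : ∀ (q r : L) (m : M),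
      ρ (br (α.symm (β (β q))) (β r)) (αM (βM m)) =
        ρ (β (β q)) (ρ (β r) (αM m)) - ρ (β (β r)) (ρ (β q) (αM m)) := by
    intro q r m
    have h := hrep3 (α.symm (β q)) (β r) (αM m)
    rw [lemc, ← hMcomm, α.apply_symm_apply, α.apply_symm_apply] at h
    exact h
  refine ⟨?_, ?_, ?_, ?_, ?_⟩
  · intro p
    simp only [Prod.mk.injEq]
    exact ⟨hcomm _, hMcomm _⟩
  · intro p q
    simp only [Prod.mk.injEq]
    refine ⟨hα _ _, ?_⟩
    have h1 := hrep1 (α.symm (β q.1)) (αM (βM.symm p.2))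
    rw [α.apply_symm_apply] at h1
    simp only [map_sub, hrep1]
    rw [lem1, ← lemMc2, h1]
  · intro p q
    simp only [Prod.mk.injEq]
    refine ⟨hβ _ _, ?_⟩
    have h2 := hrep2 (α.symm (β q.1)) (αM (βM.symm p.2))
    rw [lemc, lemMc] at h2
    simp only [map_sub, hrep2]
    rw [βM.symm_apply_apply, ← h2]
  · intro p q
    simp only [Prod.mk.injEq, Prod.neg_mk, lem1, βM.symm_apply_apply]
    exact ⟨hskew _ _, by rw [neg_sub]⟩
  · intro p q r
    simp only [Prod.mk_add_mk, Prod.mk.injEq, Prod.mk_eq_zero, lem1,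
      βM.symm_apply_apply]
    refine ⟨hjac _ _ _, ?_⟩
    simp only [map_sub, hβ, hcomm, lemα, lem1, key]
    abel
end

section
/- Let (C, Δ, ψ, ω) be a BiHom-coassociative coalgebra. Then the dual space C* with convolution product (fg)(x) = f(x₁)g(x₂) and structure maps ω* (transpose of ω) and ψ* (transpose of ψ) is a BiHom-associative algebra (C*, Δ*, ω*, ψ*). Moreover, if C is counital with counit ε, then ε is a unit for C*. -/
open scoped TensorProduct

/-- The dual of a BiHom-coassociative coalgebra `(C, Δ, ψ, ω)` with convolution
product `(f ⋆ g)(x) = f(x₁) g(x₂)` and structure maps `ω*`, `ψ*` is a BiHom-associative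
algebra; moreover if `C` is counital with counit `ε`, then `ε` is a unit. -/
theorem dual_of_biHom_coalgebra (k C : Type*) [Field k] [AddCommGroup C] [Module k C]
    (Δ : C →ₗ[k] C ⊗[k] C) (ψ ω : C →ₗ[k] C)
    (hcomm : ∀ c : C, ψ (ω c) = ω (ψ c))
    (hψΔ : (TensorProduct.map ψ ψ) ∘ₗ Δ = Δ ∘ₗ ψ)
    (hωΔ : (TensorProduct.map ω ω) ∘ₗ Δ = Δ ∘ₗ ω)
    (hcoassoc : (TensorProduct.assoc k C C C).toLinearMap ∘ₗ (TensorProduct.map Δ ψ) ∘ₗ Δ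
      = (TensorProduct.map ω Δ) ∘ₗ Δ) :
    ∀ conv : (C →ₗ[k] k) → (C →ₗ[k] k) → (C →ₗ[k] k),
      (conv = fun f g => LinearMap.mul' k k ∘ₗ (TensorProduct.map f g) ∘ₗ Δ) →
      ((∀ f : C →ₗ[k] k, (f ∘ₗ ω) ∘ₗ ψ = (f ∘ₗ ψ) ∘ₗ ω) ∧
       (∀ f g : C →ₗ[k] k, conv f g ∘ₗ ω = conv (f ∘ₗ ω) (g ∘ₗ ω)) ∧
       (∀ f g : C →ₗ[k] k, conv f g ∘ₗ ψ = conv (f ∘ₗ ψ) (g ∘ₗ ψ)) ∧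
       (∀ f g h : C →ₗ[k] k, conv (f ∘ₗ ω) (conv g h) = conv (conv f g) (h ∘ₗ ψ)) ∧
       (∀ ε : C →ₗ[k] k,
          ε ∘ₗ ψ = ε → ε ∘ₗ ω = ε →
          (TensorProduct.rid k C).toLinearMap ∘ₗ
            (TensorProduct.map (LinearMap.id : C →ₗ[k] C) ε) ∘ₗ Δ = ω →
          (TensorProduct.lid k C).toLinearMap ∘ₗ
            (TensorProduct.map ε (LinearMap.id : C →ₗ[k] C)) ∘ₗ Δ = ψ →
          (ε ∘ₗ ω = ε ∧ ε ∘ₗ ψ = ε ∧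
           (∀ f : C →ₗ[k] k, conv f ε = f ∘ₗ ω) ∧
           (∀ f : C →ₗ[k] k, conv ε f = f ∘ₗ ψ)))) := by
  intro conv hconv
  subst hconv
  refine ⟨?_, ?_, ?_, ?_, ?_⟩
  · intro f; ext c; simp [hcomm c]
  · intro f g
    ext c
    have h1 := congrArg (fun F => F c) hωΔ
    simp only [LinearMap.comp_apply] at h1 ⊢
    rw [← h1]
    induction Δ c using TensorProduct.induction_on with
    | zero => simp
    | tmul a b => simp
    | add x y hx hy => simp_all [map_add]
  · intro f g
    ext c
    have h1 := congrArg (fun F => F c) hψΔ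
    simp only [LinearMap.comp_apply] at h1 ⊢
    rw [← h1]
    induction Δ c using TensorProduct.induction_on with
    | zero => simp
    | tmul a b => simp
    | add x y hx hy => simp_all [map_add]
  · intro f g h
    ext c
    have hco := congrArg (fun F => F c) hcoassoc
    simp only [LinearMap.comp_apply] at hco
    set A : C ⊗[k] (C ⊗[k] C) →ₗ[k] k :=
      LinearMap.mul' k k ∘ₗ TensorProduct.map f
        (LinearMap.mul' k k ∘ₗ TensorProduct.map g h) with hA
    set B : (C ⊗[k] C) ⊗[k] C →ₗ[k] k :=
      LinearMap.mul' k k ∘ₗ TensorProduct.map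
        (LinearMap.mul' k k ∘ₗ TensorProduct.map f g) h with hB
    have claim1 : ∀ t : C ⊗[k] C,
        LinearMap.mul' k k (TensorProduct.map (f ∘ₗ ω)
          (LinearMap.mul' k k ∘ₗ TensorProduct.map g h ∘ₗ Δ) t)
        = A (TensorProduct.map ω Δ t) := by
      intro t
      induction t using TensorProduct.induction_on with
      | zero => simp
      | tmul a b => simp [hA]
      | add x y hx hy => simp_all [map_add]
    have claim2 : ∀ t : C ⊗[k] C,
        LinearMap.mul' k k (TensorProduct.map
          (LinearMap.mul' k k ∘ₗ TensorProduct.map f g ∘ₗ Δ) (h ∘ₗ ψ) t)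
        = B (TensorProduct.map Δ ψ t) := by
      intro t
      induction t using TensorProduct.induction_on with
      | zero => simp
      | tmul a b => simp [hB]
      | add x y hx hy => simp_all [map_add]
    have claim3 : ∀ s : (C ⊗[k] C) ⊗[k] C,
        A ((TensorProduct.assoc k C C C) s) = B s := by
      intro s
      induction s using TensorProduct.induction_on with
      | zero => simp
      | tmul x c' =>
        induction x using TensorProduct.induction_on with
        | zero => simp
        | tmul a b => simp [hA, hB, mul_assoc]
        | add u v hu hv => simp_all [TensorProduct.add_tmul, map_add]
      | add x y hx hy => simp_all [map_add]
    simp only [LinearMap.comp_apply]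
    rw [claim1 (Δ c), claim2 (Δ c), ← hco]; exact claim3 _
  · intro ε hεψ hεω hcounitR hcounitL
    refine ⟨hεω, hεψ, ?_, ?_⟩
    · intro f
      ext c
      have h2 := congrArg (fun F => F c) hcounitR
      simp only [LinearMap.comp_apply] at h2 ⊢
      calc LinearMap.mul' k k (TensorProduct.map f ε (Δ c))
          = f ((TensorProduct.rid k C) (TensorProduct.map LinearMap.id ε (Δ c))) := by
            induction Δ c using TensorProduct.induction_on with
            | zero => simp
            | tmul a b => simp [mul_comm]
            | add x y hx hy => simp_all [map_add]
        _ = f (ω c) := congrArg f h2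
    · intro f
      ext c
      have h2 := congrArg (fun F => F c) hcounitL
      simp only [LinearMap.comp_apply] at h2 ⊢
      calc LinearMap.mul' k k (TensorProduct.map ε f (Δ c))
          = f ((TensorProduct.lid k C) (TensorProduct.map ε LinearMap.id (Δ c))) := by
            induction Δ c using TensorProduct.induction_on with
            | zero => simp
            | tmul a b => simp
            | add x y hx hy => simp_all [map_add]
        _ = f (ψ c) := congrArg f h2
end

section
/- Let (H, μ, Δ, α, β, ψ, ω) be a unital counital BiHom-bialgebra with α and β bijective. If x and y are primitive elements (Δ(z) = 1⊗z + z⊗1), then the commutator [x, y] = xy - α⁻¹β(y)·αβ⁻¹(x) is also primitive. Consequently the set Prim(H) of primitive elements is a BiHom-Lie algebra under this bracket with structure maps α, β. -/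
open scoped TensorProduct

/-- In a unital counital BiHom-bialgebra with `α, β` bijective, the commutator
`[x, y] = xy - α⁻¹β(y)·αβ⁻¹(x)` of two primitive elements is primitive; consequently the set
`Prim(H)` of primitive elements is a BiHom-Lie algebra under this bracket with structure maps
`α, β`. -/
theorem primitives_form_biHom_lie (k H : Type*) [Field k] [AddCommGroup H] [Module k H]
    (μ : H →ₗ[k] H →ₗ[k] H) (Δ : H →ₗ[k] H ⊗[k] H)
    (α β : H ≃ₗ[k] H) (ψ ω : H →ₗ[k] H) (one : H) (ε : H →ₗ[k] k)
    -- BiHom-associative algebra axioms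
    (hab : ∀ a : H, α (β a) = β (α a))
    (hαm : ∀ a b : H, α (μ a b) = μ (α a) (α b))
    (hβm : ∀ a b : H, β (μ a b) = μ (β a) (β b))
    (hassoc : ∀ a b c : H, μ (α a) (μ b c) = μ (μ a b) (β c))
    -- BiHom-coassociative coalgebra axioms
    (hψω : ∀ a : H, ψ (ω a) = ω (ψ a))
    (hψΔ : (TensorProduct.map ψ ψ) ∘ₗ Δ = Δ ∘ₗ ψ)
    (hωΔ : (TensorProduct.map ω ω) ∘ₗ Δ = Δ ∘ₗ ω)
    (hcoassoc : (TensorProduct.assoc k H H H).toLinearMap ∘ₗ (TensorProduct.map Δ ψ) ∘ₗ Δ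
      = (TensorProduct.map ω Δ) ∘ₗ Δ)
    -- BiHom-bialgebra axioms
    (hΔmult : Δ ∘ₗ TensorProduct.lift μ =
      (TensorProduct.map (TensorProduct.lift μ) (TensorProduct.lift μ)) ∘ₗ
        (TensorProduct.tensorTensorTensorComm k H H H H).toLinearMap ∘ₗ
        (TensorProduct.map Δ Δ))
    (hαψ : ∀ a : H, α (ψ a) = ψ (α a)) (hαω : ∀ a : H, α (ω a) = ω (α a))
    (hβψ : ∀ a : H, β (ψ a) = ψ (β a)) (hβω : ∀ a : H, β (ω a) = ω (β a))
    (hαΔ : (TensorProduct.map α.toLinearMap α.toLinearMap) ∘ₗ Δ = Δ ∘ₗ α.toLinearMap)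
    (hβΔ : (TensorProduct.map β.toLinearMap β.toLinearMap) ∘ₗ Δ = Δ ∘ₗ β.toLinearMap)
    (hψm : ∀ a b : H, ψ (μ a b) = μ (ψ a) (ψ b))
    (hωm : ∀ a b : H, ω (μ a b) = μ (ω a) (ω b))
    -- unit axioms
    (hα1 : α one = one) (hβ1 : β one = one)
    (hr1 : ∀ a : H, μ a one = α a) (hl1 : ∀ a : H, μ one a = β a)
    (hΔ1 : Δ one = one ⊗ₜ[k] one) (hψ1 : ψ one = one) (hω1 : ω one = one)
    -- counit axioms
    (hεψ : ε ∘ₗ ψ = ε) (hεω : ε ∘ₗ ω = ε)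
    (hcounit_r : (TensorProduct.rid k H).toLinearMap ∘ₗ
      (TensorProduct.map (LinearMap.id : H →ₗ[k] H) ε) ∘ₗ Δ = ω)
    (hcounit_l : (TensorProduct.lid k H).toLinearMap ∘ₗ
      (TensorProduct.map ε (LinearMap.id : H →ₗ[k] H)) ∘ₗ Δ = ψ)
    (hε1 : ε one = 1) (hεα : ∀ a : H, ε (α a) = ε a) (hεβ : ∀ a : H, ε (β a) = ε a)
    (hεm : ∀ a b : H, ε (μ a b) = ε a * ε b) :
    ∀ P : Set H, (P = {x : H | Δ x = one ⊗ₜ[k] x + x ⊗ₜ[k] one}) →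
    ∀ br : H → H → H, (br = fun x y => μ x y - μ (α.symm (β y)) (α (β.symm x))) →
      ((∀ x ∈ P, ∀ y ∈ P, br x y ∈ P) ∧
       (∀ x ∈ P, α x ∈ P) ∧ (∀ x ∈ P, β x ∈ P) ∧
       (∀ x ∈ P, α.symm x ∈ P) ∧ (∀ x ∈ P, β.symm x ∈ P) ∧
       (∀ x ∈ P, ∀ y ∈ P, α (br x y) = br (α x) (α y)) ∧
       (∀ x ∈ P, ∀ y ∈ P, β (br x y) = br (β x) (β y)) ∧
       (∀ x ∈ P, ∀ y ∈ P, br (β x) (α y) = - br (β y) (α x)) ∧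
       (∀ x ∈ P, ∀ y ∈ P, ∀ z ∈ P,
         br (β (β x)) (br (β y) (α z)) + br (β (β y)) (br (β z) (α x)) +
           br (β (β z)) (br (β x) (α y)) = 0)) := by
  intro P hP br hbr
  subst hP; subst hbr
  have hα1' : α.symm one = one := α.injective (by rw [α.apply_symm_apply, hα1])
  have hβ1' : β.symm one = one := β.injective (by rw [β.apply_symm_apply, hβ1])
  have hc1 : ∀ a : H, α (β.symm a) = β.symm (α a) := fun a =>
    β.injective (by rw [← hab, β.apply_symm_apply, β.apply_symm_apply])
  have hαsm : ∀ a b : H, α.symm (μ a b) = μ (α.symm a) (α.symm b) := fun a b =>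
    α.injective (by rw [α.apply_symm_apply, hαm, α.apply_symm_apply, α.apply_symm_apply])
  -- closure of primitivity under α, β and their inverses
  have hPα : ∀ x : H, Δ x = one ⊗ₜ[k] x + x ⊗ₜ[k] one →
      Δ (α x) = one ⊗ₜ[k] (α x) + (α x) ⊗ₜ[k] one := by
    intro x hx
    have h := LinearMap.congr_fun hαΔ x
    simp only [LinearMap.comp_apply, LinearEquiv.coe_coe] at h
    rw [← h, hx]
    simp only [map_add, TensorProduct.map_tmul, LinearEquiv.coe_coe, hα1]
  have hPβ : ∀ x : H, Δ x = one ⊗ₜ[k] x + x ⊗ₜ[k] one →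
      Δ (β x) = one ⊗ₜ[k] (β x) + (β x) ⊗ₜ[k] one := by
    intro x hx
    have h := LinearMap.congr_fun hβΔ x
    simp only [LinearMap.comp_apply, LinearEquiv.coe_coe] at h
    rw [← h, hx]
    simp only [map_add, TensorProduct.map_tmul, LinearEquiv.coe_coe, hβ1]
  have cancelα : ∀ t : H ⊗[k] H, TensorProduct.map α.symm.toLinearMap α.symm.toLinearMap
      (TensorProduct.map α.toLinearMap α.toLinearMap t) = t := by
    intro t
    induction t using TensorProduct.induction_on with
    | zero => simp
    | tmul a b => simp
    | add a b ha hb => simp [map_add, ha, hb]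
  have cancelβ : ∀ t : H ⊗[k] H, TensorProduct.map β.symm.toLinearMap β.symm.toLinearMap
      (TensorProduct.map β.toLinearMap β.toLinearMap t) = t := by
    intro t
    induction t using TensorProduct.induction_on with
    | zero => simp
    | tmul a b => simp
    | add a b ha hb => simp [map_add, ha, hb]
  have hPαs : ∀ x : H, Δ x = one ⊗ₜ[k] x + x ⊗ₜ[k] one →
      Δ (α.symm x) = one ⊗ₜ[k] (α.symm x) + (α.symm x) ⊗ₜ[k] one := by
    intro x hx
    have h := LinearMap.congr_fun hαΔ (α.symm x)
    simp only [LinearMap.comp_apply, LinearEquiv.coe_coe, α.apply_symm_apply] at h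
    have h2 := congrArg (TensorProduct.map α.symm.toLinearMap α.symm.toLinearMap) h
    rw [cancelα, hx] at h2
    rw [h2]
    simp [TensorProduct.map_tmul, hα1']
  have hPβs : ∀ x : H, Δ x = one ⊗ₜ[k] x + x ⊗ₜ[k] one →
      Δ (β.symm x) = one ⊗ₜ[k] (β.symm x) + (β.symm x) ⊗ₜ[k] one := by
    intro x hx
    have h := LinearMap.congr_fun hβΔ (β.symm x)
    simp only [LinearMap.comp_apply, LinearEquiv.coe_coe, β.apply_symm_apply] at h
    have h2 := congrArg (TensorProduct.map β.symm.toLinearMap β.symm.toLinearMap) h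
    rw [cancelβ, hx] at h2
    rw [h2]
    simp [TensorProduct.map_tmul, hβ1']
  -- comultiplication of a product of primitives
  have hΔμ : ∀ a b : H, Δ a = one ⊗ₜ[k] a + a ⊗ₜ[k] one → Δ b = one ⊗ₜ[k] b + b ⊗ₜ[k] one →
      Δ (μ a b) = one ⊗ₜ[k] (μ a b) + (μ a b) ⊗ₜ[k] one
        + (β b) ⊗ₜ[k] (α a) + (α a) ⊗ₜ[k] (β b) := by
    intro a b ha hb
    have h := LinearMap.congr_fun hΔmult (a ⊗ₜ[k] b)
    simp only [LinearMap.comp_apply, TensorProduct.lift.tmul, TensorProduct.map_tmul,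
      LinearEquiv.coe_coe] at h
    rw [ha, hb] at h
    rw [h]
    simp only [TensorProduct.tmul_add, TensorProduct.add_tmul, map_add,
      TensorProduct.tensorTensorTensorComm_tmul, TensorProduct.map_tmul,
      TensorProduct.lift.tmul, hr1, hl1, hα1, hβ1]
    abel
  -- primitivity of the bracket
  have hbrP : ∀ x y : H, Δ x = one ⊗ₜ[k] x + x ⊗ₜ[k] one → Δ y = one ⊗ₜ[k] y + y ⊗ₜ[k] one →
      Δ (μ x y - μ (α.symm (β y)) (α (β.symm x))) =
        one ⊗ₜ[k] (μ x y - μ (α.symm (β y)) (α (β.symm x)))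
          + (μ x y - μ (α.symm (β y)) (α (β.symm x))) ⊗ₜ[k] one := by
    intro x y hx hy
    have h1 := hΔμ x y hx hy
    have h2 := hΔμ (α.symm (β y)) (α (β.symm x)) (hPαs _ (hPβ _ hy)) (hPα _ (hPβs _ hx))
    have e1 : β (α (β.symm x)) = α x := by rw [← hab, β.apply_symm_apply]
    have e2 : α (α.symm (β y)) = β y := α.apply_symm_apply _
    rw [e1, e2] at h2
    rw [map_sub, h1, h2]
    simp only [TensorProduct.tmul_sub, TensorProduct.sub_tmul]
    abel
  -- the key associativity rearrangement for Jacobi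
  have hT : ∀ a b c : H, μ (α.symm (β (μ (β b) (α c)))) (α (β a)) =
      μ (β (β b)) (μ (β c) (α a)) := by
    intro a b c
    rw [hab, hβm, hαsm, ← hab, α.symm_apply_apply, ← hassoc, α.apply_symm_apply]
  have s1 : ∀ a : H, α.symm (β (α a)) = β a := fun a => by rw [← hab, α.symm_apply_apply]
  have s2 : ∀ a : H, α (β.symm (β a)) = α a := fun a => by rw [β.symm_apply_apply]
  refine ⟨?_, ?_, ?_, ?_, ?_, ?_, ?_, ?_, ?_⟩
  · intro x hx y hy
    simp only [Set.mem_setOf_eq] at hx hy ⊢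
    exact hbrP x y hx hy
  · intro x hx
    simp only [Set.mem_setOf_eq] at hx ⊢
    exact hPα x hx
  · intro x hx
    simp only [Set.mem_setOf_eq] at hx ⊢
    exact hPβ x hx
  · intro x hx
    simp only [Set.mem_setOf_eq] at hx ⊢
    exact hPαs x hx
  · intro x hx
    simp only [Set.mem_setOf_eq] at hx ⊢
    exact hPβs x hx
  · intro x _ y _
    have e1 : α.symm (β (α y)) = β y := by rw [← hab, α.symm_apply_apply]
    have e2 : β.symm (α x) = α (β.symm x) := (hc1 x).symm
    simp only [map_sub, hαm, e1, e2, α.apply_symm_apply]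
  · intro x _ y _
    have e1 : β (α (β.symm x)) = α x := by rw [← hab, β.apply_symm_apply]
    have e2 : β.symm (β x) = x := β.symm_apply_apply x
    have e3 : β (α.symm (β y)) = α.symm (β (β y)) :=
      α.injective (by rw [hab, α.apply_symm_apply, α.apply_symm_apply])
    simp only [map_sub, hβm, e1, e2, e3]
  · intro x _ y _
    have e1 : α.symm (β (α y)) = β y := by rw [← hab, α.symm_apply_apply]
    have e1' : α.symm (β (α x)) = β x := by rw [← hab, α.symm_apply_apply]
    have e2 : α (β.symm (β x)) = α x := by rw [β.symm_apply_apply]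
    have e2' : α (β.symm (β y)) = α y := by rw [β.symm_apply_apply]
    simp only [e1, e1', e2, e2']
    abel
  · intro x _ y _ z _
    simp only [map_sub, LinearMap.sub_apply, s1, s2]
    simp only [hT]
    abel
end

section
/- Let (A, μ, α, β) be a BiHom-associative algebra and (C, Δ, ψ, ω) a BiHom-coassociative coalgebra. For f, g ∈ Hom(C, A) define f ⋆ g = μ ∘ (f⊗g) ∘ Δ, and define φ(f) = α∘f∘ω, γ(f) = β∘f∘ψ. Then (Hom(C,A), ⋆, φ, γ) is a BiHom-associative algebra. Moreover, if A is unital with unit 1_A and C counital with counit ε, then η∘ε (where η(1) = 1_A) is a unit. -/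
open scoped TensorProduct

/-- For a BiHom-associative algebra `(A, μ, α, β)` and a BiHom-coassociative
coalgebra `(C, Δ, ψ, ω)`, the space `Hom(C, A)` with the convolution `f ⋆ g = μ∘(f⊗g)∘Δ` and
structure maps `φ(f) = α∘f∘ω`, `γ(f) = β∘f∘ψ` is a BiHom-associative algebra; if `A` is
unital with unit `1_A` and `C` counital with counit `ε`, then `η∘ε` is a unit. -/
theorem convolution_biHom_algebra (k A C : Type*) [Field k]
    [AddCommGroup A] [Module k A] [AddCommGroup C] [Module k C]
    (μ : A →ₗ[k] A →ₗ[k] A) (α β : A →ₗ[k] A)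
    (hab : ∀ a : A, α (β a) = β (α a))
    (hαm : ∀ a b : A, α (μ a b) = μ (α a) (α b))
    (hβm : ∀ a b : A, β (μ a b) = μ (β a) (β b))
    (hassoc : ∀ a b c : A, μ (α a) (μ b c) = μ (μ a b) (β c))
    (Δ : C →ₗ[k] C ⊗[k] C) (ψ ω : C →ₗ[k] C)
    (hψω : ∀ c : C, ψ (ω c) = ω (ψ c))
    (hψΔ : (TensorProduct.map ψ ψ) ∘ₗ Δ = Δ ∘ₗ ψ)
    (hωΔ : (TensorProduct.map ω ω) ∘ₗ Δ = Δ ∘ₗ ω)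
    (hcoassoc : (TensorProduct.assoc k C C C).toLinearMap ∘ₗ (TensorProduct.map Δ ψ) ∘ₗ Δ
      = (TensorProduct.map ω Δ) ∘ₗ Δ) :
    ∀ conv : (C →ₗ[k] A) → (C →ₗ[k] A) → (C →ₗ[k] A),
      (conv = fun f g => (TensorProduct.lift μ) ∘ₗ (TensorProduct.map f g) ∘ₗ Δ) →
      ((∀ f : C →ₗ[k] A, α ∘ₗ (β ∘ₗ f ∘ₗ ψ) ∘ₗ ω = β ∘ₗ (α ∘ₗ f ∘ₗ ω) ∘ₗ ψ) ∧
       (∀ f g : C →ₗ[k] A,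
         α ∘ₗ (conv f g) ∘ₗ ω = conv (α ∘ₗ f ∘ₗ ω) (α ∘ₗ g ∘ₗ ω)) ∧
       (∀ f g : C →ₗ[k] A,
         β ∘ₗ (conv f g) ∘ₗ ψ = conv (β ∘ₗ f ∘ₗ ψ) (β ∘ₗ g ∘ₗ ψ)) ∧
       (∀ f g h : C →ₗ[k] A,
         conv (α ∘ₗ f ∘ₗ ω) (conv g h) = conv (conv f g) (β ∘ₗ h ∘ₗ ψ)) ∧
       (∀ (one : A) (ε : C →ₗ[k] k),
          α one = one → β one = one →
          (∀ a : A, μ a one = α a) → (∀ a : A, μ one a = β a) →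
          ε ∘ₗ ψ = ε → ε ∘ₗ ω = ε →
          (TensorProduct.rid k C).toLinearMap ∘ₗ
            (TensorProduct.map (LinearMap.id : C →ₗ[k] C) ε) ∘ₗ Δ = ω →
          (TensorProduct.lid k C).toLinearMap ∘ₗ
            (TensorProduct.map ε (LinearMap.id : C →ₗ[k] C)) ∘ₗ Δ = ψ →
          ∀ e : C →ₗ[k] A, (e = (LinearMap.toSpanSingleton k A one) ∘ₗ ε) →
            (α ∘ₗ e ∘ₗ ω = e ∧ β ∘ₗ e ∘ₗ ψ = e ∧
             (∀ f : C →ₗ[k] A, conv f e = α ∘ₗ f ∘ₗ ω) ∧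
             (∀ f : C →ₗ[k] A, conv e f = β ∘ₗ f ∘ₗ ψ)))) := by
  intro conv hconv
  subst hconv
  refine ⟨?_, ?_, ?_, ?_, ?_⟩
  · intro f; ext c
    simp only [LinearMap.comp_apply, hψω, hab]
  · intro f g
    ext c
    have h1 : Δ (ω c) = TensorProduct.map ω ω (Δ c) :=
      (LinearMap.congr_fun hωΔ c).symm
    have key : ∀ t : C ⊗[k] C,
        α (TensorProduct.lift μ (TensorProduct.map f g (TensorProduct.map ω ω t)))
          = TensorProduct.lift μ
              (TensorProduct.map (α ∘ₗ f ∘ₗ ω) (α ∘ₗ g ∘ₗ ω) t) := by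
      intro t
      induction t using TensorProduct.induction_on with
      | zero => simp
      | tmul a b => simp [hαm]
      | add x y hx hy => simp [map_add, hx, hy]
    simp only [LinearMap.comp_apply, h1, key]
  · intro f g
    ext c
    have h1 : Δ (ψ c) = TensorProduct.map ψ ψ (Δ c) :=
      (LinearMap.congr_fun hψΔ c).symm
    have key : ∀ t : C ⊗[k] C,
        β (TensorProduct.lift μ (TensorProduct.map f g (TensorProduct.map ψ ψ t)))
          = TensorProduct.lift μ
              (TensorProduct.map (β ∘ₗ f ∘ₗ ψ) (β ∘ₗ g ∘ₗ ψ) t) := by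
      intro t
      induction t using TensorProduct.induction_on with
      | zero => simp
      | tmul a b => simp [hβm]
      | add x y hx hy => simp [map_add, hx, hy]
    simp only [LinearMap.comp_apply, h1, key]
  · intro f g h
    ext c
    have hco : (TensorProduct.assoc k C C C) (TensorProduct.map Δ ψ (Δ c))
        = TensorProduct.map ω Δ (Δ c) := LinearMap.congr_fun hcoassoc c
    have e1 : ∀ t : C ⊗[k] C,
        TensorProduct.lift μ (TensorProduct.map (α ∘ₗ f ∘ₗ ω)
            (TensorProduct.lift μ ∘ₗ TensorProduct.map g h ∘ₗ Δ) t)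
          = TensorProduct.lift μ (TensorProduct.map (α ∘ₗ f)
              (TensorProduct.lift μ ∘ₗ TensorProduct.map g h)
              (TensorProduct.map ω Δ t)) := by
      intro t
      induction t using TensorProduct.induction_on with
      | zero => simp
      | tmul a b => simp
      | add x y hx hy => simp [map_add, hx, hy]
    have e2 : ∀ t : C ⊗[k] C,
        TensorProduct.lift μ (TensorProduct.map
            (TensorProduct.lift μ ∘ₗ TensorProduct.map f g ∘ₗ Δ) (β ∘ₗ h ∘ₗ ψ) t)
          = TensorProduct.lift μ (TensorProduct.map
              (TensorProduct.lift μ ∘ₗ TensorProduct.map f g) (β ∘ₗ h)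
              (TensorProduct.map Δ ψ t)) := by
      intro t
      induction t using TensorProduct.induction_on with
      | zero => simp
      | tmul a b => simp
      | add x y hx hy => simp [map_add, hx, hy]
    have key : ∀ y : (C ⊗[k] C) ⊗[k] C,
        TensorProduct.lift μ (TensorProduct.map (α ∘ₗ f)
            (TensorProduct.lift μ ∘ₗ TensorProduct.map g h)
            ((TensorProduct.assoc k C C C) y))
          = TensorProduct.lift μ (TensorProduct.map
              (TensorProduct.lift μ ∘ₗ TensorProduct.map f g) (β ∘ₗ h) y) := by
      intro y
      induction y using TensorProduct.induction_on with
      | zero => simp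
      | tmul x cc =>
        induction x using TensorProduct.induction_on with
        | zero => simp
        | tmul a b => simp [hassoc]
        | add x y hx hy =>
          simp only [TensorProduct.add_tmul, map_add, hx, hy]
      | add x y hx hy => simp [map_add, hx, hy]
    simp only [LinearMap.comp_apply, e1, e2, ← hco, key]
  · intro one ε hα1 hβ1 hμ1 h1μ hεψ hεω hctR hctL e he
    subst he
    have hεψ' : ∀ c : C, ε (ψ c) = ε c := fun c => LinearMap.congr_fun hεψ c
    have hεω' : ∀ c : C, ε (ω c) = ε c := fun c => LinearMap.congr_fun hεω c
    refine ⟨?_, ?_, ?_, ?_⟩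
    · ext c
      simp [LinearMap.toSpanSingleton_apply, hεω', hα1]
    · ext c
      simp [LinearMap.toSpanSingleton_apply, hεψ', hβ1]
    · intro f
      ext c
      have hR : (TensorProduct.rid k C)
          (TensorProduct.map LinearMap.id ε (Δ c)) = ω c := LinearMap.congr_fun hctR c
      have key : ∀ t : C ⊗[k] C,
          TensorProduct.lift μ (TensorProduct.map f
              ((LinearMap.toSpanSingleton k A one) ∘ₗ ε) t)
            = α (f ((TensorProduct.rid k C) (TensorProduct.map LinearMap.id ε t))) := by
        intro t
        induction t using TensorProduct.induction_on with
        | zero => simp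
        | tmul a b =>
          simp [LinearMap.toSpanSingleton_apply, TensorProduct.rid_tmul, hμ1]
        | add x y hx hy => simp [map_add, hx, hy]
      simp only [LinearMap.comp_apply, key, hR]
    · intro f
      ext c
      have hL : (TensorProduct.lid k C)
          (TensorProduct.map ε LinearMap.id (Δ c)) = ψ c := LinearMap.congr_fun hctL c
      have key : ∀ t : C ⊗[k] C,
          TensorProduct.lift μ (TensorProduct.map
              ((LinearMap.toSpanSingleton k A one) ∘ₗ ε) f t)
            = β (f ((TensorProduct.lid k C) (TensorProduct.map ε LinearMap.id t))) := by
        intro t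
        induction t using TensorProduct.induction_on with
        | zero => simp
        | tmul a b =>
          simp [LinearMap.toSpanSingleton_apply, TensorProduct.lid_tmul, h1μ]
        | add x y hx hy => simp [map_add, hx, hy]
      simp only [LinearMap.comp_apply, key, hL]
end

section
/- Let (H, μ, Δ, α, β, 1, ε, S) be a monoidal BiHom-Hopf algebra. Then: (i) S(1) = 1 and ε∘S = ε; (ii) S(β(a)α(b)) = S(β(b))S(α(a)) for all a, b ∈ H; (iii) α(S(h)₁)⊗β(S(h)₂) = β(S(h₂))⊗α(S(h₁)) for all h ∈ H. -/
/-!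
For `d : X → X ⊗ X` BiHom-coassociative and `m : A ⊗ A → A` BiHom-associative, the convolution
`f * g = m ∘ (f ⊗ g) ∘ d` satisfies `f * (g * h) = (f' * g) * (β_A h ψ_X)` whenever
`f α_X = α_A f'`, and the unit `e = 1 ε` acts by `f * e = α_A f ω_X`, `e * f = β_A f ψ_X`.
So a left and a right convolution inverse of `g` agree up to twisting:
`f' * g = e = g * h` forces `α_A f ω_X = β_A² h ψ_X²`.

Part (ii) applies this in `Hom(H ⊗ H, H)` to `g = μ`, `f = S ∘ μ` and
`h (x ⊗ y) = S(β α⁻¹ y) S(β⁻¹ α x)`; part (iii) applies it in `Hom(H, H ⊗ H)` to `g = Δ`,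
`f = Δ ∘ S` and `h = τ ∘ (S α⁻¹ β ⊗ S α β⁻¹) ∘ Δ`. Part (i) is the antipode axiom at `1`,
and composed with `ε`.
-/

open scoped TensorProduct

theorem TensorProduct.tensorTensorTensorComm_map {R M N P Q S T V W : Type*}
    [CommSemiring R] [AddCommMonoid M] [Module R M] [AddCommMonoid N] [Module R N]
    [AddCommMonoid P] [Module R P] [AddCommMonoid Q] [Module R Q] [AddCommMonoid S] [Module R S]
    [AddCommMonoid T] [Module R T] [AddCommMonoid V] [Module R V] [AddCommMonoid W] [Module R W]
    (f : M →ₗ[R] S) (g : N →ₗ[R] T) (h : P →ₗ[R] V) (j : Q →ₗ[R] W)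
    (x : (M ⊗[R] N) ⊗[R] (P ⊗[R] Q)) :
    tensorTensorTensorComm R S T V W (map (map f g) (map h j) x) =
      map (map f h) (map g j) (tensorTensorTensorComm R M N P Q x) :=
  congr($(tensorTensorTensorComm_comp_map (R := R) f g h j) x)

namespace BiHom

open TensorProduct LinearMap

section Convolution

variable {R A X : Type*} [CommSemiring R] [AddCommMonoid A] [Module R A]
  [AddCommMonoid X] [Module R X]

def conv (m : A ⊗[R] A →ₗ[R] A) (d : X →ₗ[R] X ⊗[R] X) (f g : X →ₗ[R] A) : X →ₗ[R] A :=
  m ∘ₗ map f g ∘ₗ d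

variable {m : A ⊗[R] A →ₗ[R] A} {d : X →ₗ[R] X ⊗[R] X}

theorem conv_assoc {αA βA : A →ₗ[R] A} {αX ωX ψX : X →ₗ[R] X}
    (hm : ∀ p q r : A, m (αA p ⊗ₜ m (q ⊗ₜ r)) = m (m (p ⊗ₜ q) ⊗ₜ βA r))
    (hd : (TensorProduct.assoc R X X X).toLinearMap ∘ₗ map d ψX ∘ₗ d = map ωX d ∘ₗ d)
    (hαω : αX ∘ₗ ωX = LinearMap.id) {f f' : X →ₗ[R] A} (hf : f ∘ₗ αX = αA ∘ₗ f')
    (g h : X →ₗ[R] A) :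
    conv m d f (conv m d g h) = conv m d (conv m d f' g) (βA ∘ₗ h ∘ₗ ψX) := by
  have hΦ : (m ∘ₗ map f (m ∘ₗ map g h)) ∘ₗ map αX LinearMap.id ∘ₗ
      (TensorProduct.assoc R X X X).toLinearMap = m ∘ₗ map (m ∘ₗ map f' g) (βA ∘ₗ h) := by
    ext x y z
    simp [← hm, ← LinearMap.comp_apply f αX, hf]
  have hd' : map LinearMap.id d ∘ₗ d =
      map αX LinearMap.id ∘ₗ (TensorProduct.assoc R X X X).toLinearMap ∘ₗ map d ψX ∘ₗ d := by
    rw [hd, ← comp_assoc, ← map_comp, hαω, id_comp]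
  ext x
  calc m (map f (m ∘ₗ map g h ∘ₗ d) (d x))
      = (m ∘ₗ map f (m ∘ₗ map g h)) ((map LinearMap.id d ∘ₗ d) x) := by
        simp [map_map, comp_assoc]
    _ = (m ∘ₗ map (m ∘ₗ map f' g) (βA ∘ₗ h)) (map d ψX (d x)) := by simp [hd', ← hΦ]
    _ = _ := by simp [conv, map_map, comp_assoc]

theorem conv_unit_left {βA : A →ₗ[R] A} {ψX : X →ₗ[R] X} {one : A} {ε : X →ₗ[R] R}
    (hl : ∀ a : A, m (one ⊗ₜ a) = βA a)
    (hε : (TensorProduct.lid R X).toLinearMap ∘ₗ map ε LinearMap.id ∘ₗ d = ψX) (f : X →ₗ[R] A) :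
    conv m d (toSpanSingleton R A one ∘ₗ ε) f = βA ∘ₗ f ∘ₗ ψX := by
  have hΦ : m ∘ₗ map (toSpanSingleton R A one ∘ₗ ε) f
      = (βA ∘ₗ f) ∘ₗ (TensorProduct.lid R X).toLinearMap ∘ₗ map ε LinearMap.id := by
    ext x y
    simp [← hl, smul_tmul]
  rw [conv, ← comp_assoc, hΦ, ← hε]; simp only [comp_assoc]

theorem conv_unit_right {αA : A →ₗ[R] A} {ωX : X →ₗ[R] X} {one : A} {ε : X →ₗ[R] R}
    (hr : ∀ a : A, m (a ⊗ₜ one) = αA a)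
    (hε : (TensorProduct.rid R X).toLinearMap ∘ₗ map LinearMap.id ε ∘ₗ d = ωX) (f : X →ₗ[R] A) :
    conv m d f (toSpanSingleton R A one ∘ₗ ε) = αA ∘ₗ f ∘ₗ ωX := by
  have hΦ : m ∘ₗ map f (toSpanSingleton R A one ∘ₗ ε)
      = (αA ∘ₗ f) ∘ₗ (TensorProduct.rid R X).toLinearMap ∘ₗ map LinearMap.id ε := by
    ext x y
    simp [← hr, ← smul_tmul']
  rw [conv, ← comp_assoc, hΦ, ← hε]; simp only [comp_assoc]

theorem left_inv_eq_right_inv {αA βA : A →ₗ[R] A} {αX ωX ψX : X →ₗ[R] X} {one : A}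
    {ε : X →ₗ[R] R}
    (hm : ∀ p q r : A, m (αA p ⊗ₜ m (q ⊗ₜ r)) = m (m (p ⊗ₜ q) ⊗ₜ βA r))
    (hd : (TensorProduct.assoc R X X X).toLinearMap ∘ₗ map d ψX ∘ₗ d = map ωX d ∘ₗ d)
    (hαω : αX ∘ₗ ωX = LinearMap.id)
    (hl : ∀ a : A, m (one ⊗ₜ a) = βA a) (hr : ∀ a : A, m (a ⊗ₜ one) = αA a)
    (hεl : (TensorProduct.lid R X).toLinearMap ∘ₗ map ε LinearMap.id ∘ₗ d = ψX)
    (hεr : (TensorProduct.rid R X).toLinearMap ∘ₗ map LinearMap.id ε ∘ₗ d = ωX)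
    {f f' g h : X →ₗ[R] A} (hf : f ∘ₗ αX = αA ∘ₗ f')
    (hf'g : conv m d f' g = toSpanSingleton R A one ∘ₗ ε)
    (hgh : conv m d g h = toSpanSingleton R A one ∘ₗ ε) :
    αA ∘ₗ f ∘ₗ ωX = βA ∘ₗ (βA ∘ₗ h ∘ₗ ψX) ∘ₗ ψX := by
  have := conv_assoc hm hd hαω hf g h
  rwa [hgh, hf'g, conv_unit_right hr hεr, conv_unit_left hl hεl] at this

end Convolution

section TensorProduct

variable {R A B X Y : Type*} [CommSemiring R] [AddCommMonoid A] [Module R A]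
  [AddCommMonoid B] [Module R B] [AddCommMonoid X] [Module R X] [AddCommMonoid Y] [Module R Y]

def tensorMul (mA : A ⊗[R] A →ₗ[R] A) (mB : B ⊗[R] B →ₗ[R] B) :
    (A ⊗[R] B) ⊗[R] (A ⊗[R] B) →ₗ[R] A ⊗[R] B :=
  map mA mB ∘ₗ (tensorTensorTensorComm R A B A B).toLinearMap

def tensorComul (dX : X →ₗ[R] X ⊗[R] X) (dY : Y →ₗ[R] Y ⊗[R] Y) :
    X ⊗[R] Y →ₗ[R] (X ⊗[R] Y) ⊗[R] (X ⊗[R] Y) :=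
  (tensorTensorTensorComm R X X Y Y).toLinearMap ∘ₗ map dX dY

@[simp]
theorem tensorMul_tmul (mA : A ⊗[R] A →ₗ[R] A) (mB : B ⊗[R] B →ₗ[R] B) (a a' : A) (b b' : B) :
    tensorMul mA mB ((a ⊗ₜ b) ⊗ₜ (a' ⊗ₜ b')) = mA (a ⊗ₜ a') ⊗ₜ mB (b ⊗ₜ b') :=
  rfl

variable {mA : A ⊗[R] A →ₗ[R] A} {mB : B ⊗[R] B →ₗ[R] B}

theorem tensorMul_assoc {αA βA : A →ₗ[R] A} {αB βB : B →ₗ[R] B}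
    (hA : ∀ p q r : A, mA (αA p ⊗ₜ mA (q ⊗ₜ r)) = mA (mA (p ⊗ₜ q) ⊗ₜ βA r))
    (hB : ∀ p q r : B, mB (αB p ⊗ₜ mB (q ⊗ₜ r)) = mB (mB (p ⊗ₜ q) ⊗ₜ βB r))
    (p q r : A ⊗[R] B) :
    tensorMul mA mB (map αA αB p ⊗ₜ tensorMul mA mB (q ⊗ₜ r)) =
      tensorMul mA mB (tensorMul mA mB (p ⊗ₜ q) ⊗ₜ map βA βB r) := by
  have h : tensorMul mA mB ∘ₗ map (map αA αB) (tensorMul mA mB) =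
      tensorMul mA mB ∘ₗ map (tensorMul mA mB) (map βA βB) ∘ₗ
        (TensorProduct.assoc R _ _ _).symm.toLinearMap := by
    ext
    simp [hA, hB]
  exact congr($h (p ⊗ₜ (q ⊗ₜ r)))

theorem tensorMul_one_right {αA : A →ₗ[R] A} {αB : B →ₗ[R] B} {oneA : A} {oneB : B}
    (hA : ∀ a : A, mA (a ⊗ₜ oneA) = αA a) (hB : ∀ b : B, mB (b ⊗ₜ oneB) = αB b)
    (t : A ⊗[R] B) : tensorMul mA mB (t ⊗ₜ (oneA ⊗ₜ oneB)) = map αA αB t := by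
  induction t using TensorProduct.induction_on <;> simp_all [add_tmul]

theorem tensorMul_one_left {βA : A →ₗ[R] A} {βB : B →ₗ[R] B} {oneA : A} {oneB : B}
    (hA : ∀ a : A, mA (oneA ⊗ₜ a) = βA a) (hB : ∀ b : B, mB (oneB ⊗ₜ b) = βB b)
    (t : A ⊗[R] B) : tensorMul mA mB ((oneA ⊗ₜ oneB) ⊗ₜ t) = map βA βB t := by
  induction t using TensorProduct.induction_on <;> simp_all [tmul_add]

variable {dX : X →ₗ[R] X ⊗[R] X} {dY : Y →ₗ[R] Y ⊗[R] Y}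

theorem tensorComul_coassoc {ψX ωX : X →ₗ[R] X} {ψY ωY : Y →ₗ[R] Y}
    (hX : (TensorProduct.assoc R X X X).toLinearMap ∘ₗ map dX ψX ∘ₗ dX = map ωX dX ∘ₗ dX)
    (hY : (TensorProduct.assoc R Y Y Y).toLinearMap ∘ₗ map dY ψY ∘ₗ dY = map ωY dY ∘ₗ dY) :
    (TensorProduct.assoc R (X ⊗[R] Y) (X ⊗[R] Y) (X ⊗[R] Y)).toLinearMap ∘ₗ
        map (tensorComul dX dY) (map ψX ψY) ∘ₗ tensorComul dX dY =
      map (map ωX ωY) (tensorComul dX dY) ∘ₗ tensorComul dX dY := by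
  have hshuffle : (TensorProduct.assoc R (X ⊗[R] Y) (X ⊗[R] Y) (X ⊗[R] Y)).toLinearMap ∘ₗ
      rTensor _ (tensorTensorTensorComm R X X Y Y).toLinearMap ∘ₗ
        (tensorTensorTensorComm R (X ⊗[R] X) X (Y ⊗[R] Y) Y).toLinearMap =
      lTensor _ (tensorTensorTensorComm R X X Y Y).toLinearMap ∘ₗ
        (tensorTensorTensorComm R X (X ⊗[R] X) Y (Y ⊗[R] Y)).toLinearMap ∘ₗ
        map (TensorProduct.assoc R X X X).toLinearMap
          (TensorProduct.assoc R Y Y Y).toLinearMap := by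
    ext; rfl
  refine LinearMap.ext fun t => ?_
  simp only [tensorComul, coe_comp, LinearEquiv.coe_coe, Function.comp_apply]
  rw [← rTensor_map, ← lTensor_map, ← tensorTensorTensorComm_map, ← tensorTensorTensorComm_map,
    map_map, map_map, ← hX, ← hY, ← map_map (TensorProduct.assoc R X X X).toLinearMap]
  exact congr($hshuffle _)

theorem tensorComul_counit_right {εX : X →ₗ[R] R} {ωX : X →ₗ[R] X} {εY : Y →ₗ[R] R}
    {ωY : Y →ₗ[R] Y}
    (hX : (TensorProduct.rid R X).toLinearMap ∘ₗ map LinearMap.id εX ∘ₗ dX = ωX)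
    (hY : (TensorProduct.rid R Y).toLinearMap ∘ₗ map LinearMap.id εY ∘ₗ dY = ωY) :
    (TensorProduct.rid R (X ⊗[R] Y)).toLinearMap ∘ₗ
        map LinearMap.id (mul' R R ∘ₗ map εX εY) ∘ₗ tensorComul dX dY = map ωX ωY := by
  have h : (TensorProduct.rid R (X ⊗[R] Y)).toLinearMap ∘ₗ
      map LinearMap.id (mul' R R ∘ₗ map εX εY) ∘ₗ (tensorTensorTensorComm R X X Y Y).toLinearMap =
      map ((TensorProduct.rid R X).toLinearMap ∘ₗ map LinearMap.id εX)
        ((TensorProduct.rid R Y).toLinearMap ∘ₗ map LinearMap.id εY) := by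
    ext
    simp [smul_tmul', smul_smul, mul_comm]
  refine TensorProduct.ext' fun x y => ?_
  rw [← hX, ← hY]
  exact congr($h (dX x ⊗ₜ dY y))

theorem tensorComul_counit_left {εX : X →ₗ[R] R} {ψX : X →ₗ[R] X} {εY : Y →ₗ[R] R}
    {ψY : Y →ₗ[R] Y}
    (hX : (TensorProduct.lid R X).toLinearMap ∘ₗ map εX LinearMap.id ∘ₗ dX = ψX)
    (hY : (TensorProduct.lid R Y).toLinearMap ∘ₗ map εY LinearMap.id ∘ₗ dY = ψY) :
    (TensorProduct.lid R (X ⊗[R] Y)).toLinearMap ∘ₗ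
        map (mul' R R ∘ₗ map εX εY) LinearMap.id ∘ₗ tensorComul dX dY = map ψX ψY := by
  have h : (TensorProduct.lid R (X ⊗[R] Y)).toLinearMap ∘ₗ
      map (mul' R R ∘ₗ map εX εY) LinearMap.id ∘ₗ (tensorTensorTensorComm R X X Y Y).toLinearMap =
      map ((TensorProduct.lid R X).toLinearMap ∘ₗ map εX LinearMap.id)
        ((TensorProduct.lid R Y).toLinearMap ∘ₗ map εY LinearMap.id) := by
    ext
    simp [smul_tmul', smul_smul, mul_comm]
  refine TensorProduct.ext' fun x y => ?_
  rw [← hX, ← hY]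
  exact congr($h (dX x ⊗ₜ dY y))

end TensorProduct

section Coassociativity

variable {R X : Type*} [CommSemiring R] [AddCommMonoid X] [Module R X]

-- In Sweedler notation: `c₁₁ ⊗ c₁₂ ⊗ c₂₁ ⊗ c₂₂ = ω c₁ ⊗ α c₂₁₁ ⊗ β c₂₁₂ ⊗ c₂₂`.
theorem map_comul_comul_comul {d : X →ₗ[R] X ⊗[R] X} {αX ωX βX ψX : X →ₗ[R] X}
    (hd : (TensorProduct.assoc R X X X).toLinearMap ∘ₗ map d ψX ∘ₗ d = map ωX d ∘ₗ d)
    (hβd : map βX βX ∘ₗ d = d ∘ₗ βX) (hαω : αX ∘ₗ ωX = LinearMap.id)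
    (hβψ : βX ∘ₗ ψX = LinearMap.id) (c : X) :
    map d d (d c) = (TensorProduct.assoc R X X (X ⊗[R] X)).symm
      (map ωX ((TensorProduct.assoc R X X X).toLinearMap ∘ₗ map (map αX βX) LinearMap.id)
        (map LinearMap.id (map d LinearMap.id ∘ₗ d) (d c))) := by
  have hd' (x : X) : TensorProduct.assoc R X X X (map d ψX (d x)) = map ωX d (d x) :=
    congr($hd x)
  have hinner : map LinearMap.id (d ∘ₗ βX) ∘ₗ d =
      ((TensorProduct.assoc R X X X).toLinearMap ∘ₗ map (map αX βX) LinearMap.id) ∘ₗ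
        map d LinearMap.id ∘ₗ d := by
    refine LinearMap.ext fun x => ?_
    calc map LinearMap.id (d ∘ₗ βX) (d x)
        = map αX (map βX βX) (map ωX d (d x)) := by rw [map_map, hαω, hβd]
      _ = TensorProduct.assoc R X X X
            (map (map αX βX) LinearMap.id (map d LinearMap.id (d x))) := by
        rw [← hd', map_map_assoc, map_map, map_map, hβψ]; rfl
  calc map d d (d c)
      = map (map LinearMap.id LinearMap.id) (d ∘ₗ βX) (map d ψX (d c)) := by
        rw [map_id, map_map, comp_assoc, hβψ]; rfl
    _ = _ := by
        rw [← (TensorProduct.assoc R X X X).symm_apply_apply (map d ψX (d c)), hd',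
          map_map_assoc_symm, map_map, map_map, id_comp, comp_id, hinner]

end Coassociativity

section MonoidalBiHomHopf

variable {k H : Type*} [CommSemiring k] [AddCommMonoid H] [Module k H]
  {μ : H →ₗ[k] H →ₗ[k] H} {Δ : H →ₗ[k] H ⊗[k] H} {α β : H ≃ₗ[k] H} {one : H}
  {ε : H →ₗ[k] k} {S : H →ₗ[k] H}

theorem antipode_one (hα1 : α one = one) (hr1 : ∀ a : H, μ a one = α a)
    (hΔ1 : Δ one = one ⊗ₜ[k] one) (hε1 : ε one = 1)
    (hS_left : lift μ ∘ₗ map S LinearMap.id ∘ₗ Δ = toSpanSingleton k H one ∘ₗ ε) :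
    S one = one := by
  apply α.injective
  simpa [hΔ1, hε1, hr1, hα1] using congr($hS_left one)

theorem counit_antipode (hεα : ∀ a : H, ε (α a) = ε a) (hε1 : ε one = 1)
    (hεm : ∀ a b : H, ε (μ a b) = ε a * ε b)
    (hcounit_r : (TensorProduct.rid k H).toLinearMap ∘ₗ map LinearMap.id ε ∘ₗ Δ =
      α.symm.toLinearMap)
    (hS_left : lift μ ∘ₗ map S LinearMap.id ∘ₗ Δ = toSpanSingleton k H one ∘ₗ ε) (h : H) :
    ε (S h) = ε h := by
  have hεS : ε ∘ₗ S ∘ₗ (TensorProduct.rid k H).toLinearMap ∘ₗ map LinearMap.id ε =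
      ε ∘ₗ lift μ ∘ₗ map S LinearMap.id := by
    ext x y
    simp [hεm, mul_comm]
  have hα : TensorProduct.rid k H (map LinearMap.id ε (Δ (α h))) = h := by
    simpa using congr($hcounit_r (α h))
  have hSl : lift μ (map S LinearMap.id (Δ (α h))) = ε (α h) • one := congr($hS_left (α h))
  calc ε (S h) = ε (S (TensorProduct.rid k H (map LinearMap.id ε (Δ (α h))))) := by rw [hα]
    _ = ε (lift μ (map S LinearMap.id (Δ (α h)))) := congr($hεS (Δ (α h)))
    _ = ε h := by simp [hSl, hε1, hεα]

theorem mul_mul_mul_assoc (hassoc : ∀ a b c : H, μ (α a) (μ b c) = μ (μ a b) (β c))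
    (hβm : ∀ a b : H, β (μ a b) = μ (β a) (β b)) (x z u v : H) :
    μ (μ x z) (μ (β u) v) = μ (α x) (μ (μ (α.symm z) u) v) := by
  have h := hassoc (α.symm z) u (β.symm v)
  rw [α.apply_symm_apply, β.apply_symm_apply] at h
  rw [← h, hassoc, hβm, β.apply_symm_apply]

theorem mul_map_symm_antipode_comul
    (hωΔ : map α.symm.toLinearMap α.symm.toLinearMap ∘ₗ Δ = Δ ∘ₗ α.symm.toLinearMap)
    (hεα : ∀ a : H, ε (α a) = ε a)
    (hS_right : lift μ ∘ₗ map LinearMap.id S ∘ₗ Δ = toSpanSingleton k H one ∘ₗ ε) (c : H) :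
    lift μ (map α.symm.toLinearMap (S ∘ₗ α.symm.toLinearMap) (Δ c)) = ε c • one := by
  have hΔ : map α.symm.toLinearMap α.symm.toLinearMap (Δ c) = Δ (α.symm c) := congr($hωΔ c)
  have hSr : lift μ (map LinearMap.id S (Δ (α.symm c))) = ε (α.symm c) • one :=
    congr($hS_right (α.symm c))
  calc lift μ (map α.symm.toLinearMap (S ∘ₗ α.symm.toLinearMap) (Δ c))
      = lift μ (map LinearMap.id S (map α.symm.toLinearMap α.symm.toLinearMap (Δ c))) := by
        rw [map_map]; rfl
    _ = ε c • one := by rw [hΔ, hSr, ← hεα, α.apply_symm_apply]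

theorem conv_antipode_comp_mul
    (hΔmult : Δ ∘ₗ lift μ =
      map (lift μ) (lift μ) ∘ₗ (tensorTensorTensorComm k H H H H).toLinearMap ∘ₗ map Δ Δ)
    (hεm : ∀ a b : H, ε (μ a b) = ε a * ε b)
    (hS_left : lift μ ∘ₗ map S LinearMap.id ∘ₗ Δ = toSpanSingleton k H one ∘ₗ ε) :
    conv (lift μ) (tensorComul Δ Δ) (S ∘ₗ lift μ) (lift μ) =
      toSpanSingleton k H one ∘ₗ mul' k k ∘ₗ map ε ε := by
  refine TensorProduct.ext' fun a b => ?_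
  have hΔ : Δ (μ a b) = map (lift μ) (lift μ) (tensorComul Δ Δ (a ⊗ₜ b)) :=
    congr($hΔmult (a ⊗ₜ b))
  have hSl : lift μ (map S LinearMap.id (Δ (μ a b))) = ε (μ a b) • one := congr($hS_left (μ a b))
  calc conv (lift μ) (tensorComul Δ Δ) (S ∘ₗ lift μ) (lift μ) (a ⊗ₜ b)
      = lift μ (map S LinearMap.id (Δ (μ a b))) := by rw [hΔ, map_map]; rfl
    _ = _ := by simp [hSl, hεm]

theorem conv_mul_antipode_swap
    (hassoc : ∀ a b c : H, μ (α a) (μ b c) = μ (μ a b) (β c))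
    (hαm : ∀ a b : H, α (μ a b) = μ (α a) (α b)) (hβm : ∀ a b : H, β (μ a b) = μ (β a) (β b))
    (hα1 : α one = one) (hl1 : ∀ a : H, μ one a = β a)
    (hωΔ : map α.symm.toLinearMap α.symm.toLinearMap ∘ₗ Δ = Δ ∘ₗ α.symm.toLinearMap)
    (hεα : ∀ a : H, ε (α a) = ε a)
    (hSα : ∀ a : H, S (α a) = α (S a)) (hSβ : ∀ a : H, S (β a) = β (S a))
    (hS_right : lift μ ∘ₗ map LinearMap.id S ∘ₗ Δ = toSpanSingleton k H one ∘ₗ ε) :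
    conv (lift μ) (tensorComul Δ Δ) (lift μ)
        (lift μ ∘ₗ map (S ∘ₗ β.toLinearMap ∘ₗ α.symm.toLinearMap)
          (S ∘ₗ β.symm.toLinearMap ∘ₗ α.toLinearMap) ∘ₗ (TensorProduct.comm k H H).toLinearMap) =
      toSpanSingleton k H one ∘ₗ mul' k k ∘ₗ map ε ε := by
  set Ψ : (H ⊗[k] H) ⊗[k] H →ₗ[k] H := lift μ ∘ₗ map α.toLinearMap
    (lift μ ∘ₗ map LinearMap.id (S ∘ₗ β.symm.toLinearMap ∘ₗ α.toLinearMap) ∘ₗ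
      (TensorProduct.comm k H H).toLinearMap) ∘ₗ (TensorProduct.assoc k H H H).toLinearMap
    with hΨ
  -- By `mul_mul_mul_assoc`, the second coproduct only enters through `μ ∘ (α⁻¹ ⊗ S α⁻¹)`,
  -- which `mul_map_symm_antipode_comul` collapses to the counit.
  have hfac : lift μ ∘ₗ map (lift μ) (lift μ ∘ₗ map (S ∘ₗ β.toLinearMap ∘ₗ α.symm.toLinearMap)
      (S ∘ₗ β.symm.toLinearMap ∘ₗ α.toLinearMap) ∘ₗ (TensorProduct.comm k H H).toLinearMap) ∘ₗ
        (tensorTensorTensorComm k H H H H).toLinearMap =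
      Ψ ∘ₗ lTensor _ (lift μ ∘ₗ map α.symm.toLinearMap (S ∘ₗ α.symm.toLinearMap)) := by
    ext x y z w
    simp [hΨ, hSβ, mul_mul_mul_assoc hassoc hβm]
  have hone : Ψ ∘ₗ (mk k (H ⊗[k] H) H).flip one =
      α.toLinearMap ∘ₗ lift μ ∘ₗ map LinearMap.id S := by
    ext x y
    simp [hΨ, hl1, ← hSβ, hSα, hαm]
  refine TensorProduct.ext' fun a b => ?_
  calc conv (lift μ) (tensorComul Δ Δ) (lift μ) _ (a ⊗ₜ b)
      = Ψ (Δ a ⊗ₜ lift μ (map α.symm.toLinearMap (S ∘ₗ α.symm.toLinearMap) (Δ b))) :=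
        congr($hfac (Δ a ⊗ₜ Δ b))
    _ = ε b • α (lift μ (map LinearMap.id S (Δ a))) := by
        rw [mul_map_symm_antipode_comul hωΔ hεα hS_right, tmul_smul, map_smul]
        exact congr(ε b • $hone (Δ a))
    _ = _ := by
        have hSr : lift μ (map LinearMap.id S (Δ a)) = ε a • one := congr($hS_right a)
        simp [hSr, hα1, smul_comm (ε b), mul_smul]

theorem antipode_mul_antidistrib (hab : ∀ a : H, α (β a) = β (α a))
    (hαm : ∀ a b : H, α (μ a b) = μ (α a) (α b)) (hβm : ∀ a b : H, β (μ a b) = μ (β a) (β b))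
    (hassoc : ∀ a b c : H, μ (α a) (μ b c) = μ (μ a b) (β c))
    (hcoassoc : (TensorProduct.assoc k H H H).toLinearMap ∘ₗ map Δ β.symm.toLinearMap ∘ₗ Δ =
      map α.symm.toLinearMap Δ ∘ₗ Δ)
    (hΔmult : Δ ∘ₗ lift μ =
      map (lift μ) (lift μ) ∘ₗ (tensorTensorTensorComm k H H H H).toLinearMap ∘ₗ map Δ Δ)
    (hωΔ : map α.symm.toLinearMap α.symm.toLinearMap ∘ₗ Δ = Δ ∘ₗ α.symm.toLinearMap)
    (hα1 : α one = one) (hr1 : ∀ a : H, μ a one = α a) (hl1 : ∀ a : H, μ one a = β a)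
    (hεα : ∀ a : H, ε (α a) = ε a) (hεm : ∀ a b : H, ε (μ a b) = ε a * ε b)
    (hcounit_r : (TensorProduct.rid k H).toLinearMap ∘ₗ map LinearMap.id ε ∘ₗ Δ =
      α.symm.toLinearMap)
    (hcounit_l : (TensorProduct.lid k H).toLinearMap ∘ₗ map ε LinearMap.id ∘ₗ Δ =
      β.symm.toLinearMap)
    (hSα : ∀ a : H, S (α a) = α (S a)) (hSβ : ∀ a : H, S (β a) = β (S a))
    (hS_left : lift μ ∘ₗ map S LinearMap.id ∘ₗ Δ = toSpanSingleton k H one ∘ₗ ε)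
    (hS_right : lift μ ∘ₗ map LinearMap.id S ∘ₗ Δ = toSpanSingleton k H one ∘ₗ ε) (a b : H) :
    S (μ (β a) (α b)) = μ (S (β b)) (S (α a)) := by
  have hαω : map α.toLinearMap α.toLinearMap ∘ₗ map α.symm.toLinearMap α.symm.toLinearMap =
      LinearMap.id := by
    rw [← map_comp, LinearEquiv.comp_symm, map_id]
  have hf : (S ∘ₗ lift μ) ∘ₗ map α.toLinearMap α.toLinearMap = α.toLinearMap ∘ₗ S ∘ₗ lift μ := by
    ext x y
    simp [← hαm, hSα]
  have key := left_inv_eq_right_inv (αA := α.toLinearMap) (βA := β.toLinearMap)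
    (fun p q r => by simpa using hassoc p q r)
    (tensorComul_coassoc hcoassoc hcoassoc) hαω (fun a => by simpa using hl1 a)
    (fun a => by simpa using hr1 a) (tensorComul_counit_left hcounit_l hcounit_l)
    (tensorComul_counit_right hcounit_r hcounit_r) hf
    (conv_antipode_comp_mul hΔmult hεm hS_left)
    (conv_mul_antipode_swap hassoc hαm hβm hα1 hl1 hωΔ hεα hSα hSβ hS_right)
  have hβα (x : H) : β (α x) = α (β x) := (hab x).symm
  have hβα' : ∀ x, β (α.symm x) = α.symm (β x) :=
    Function.Semiconj.inverses_right hβα α.right_inv α.left_inv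
  have hβ'α (x : H) : β.symm (α x) = α (β.symm x) :=
    (Function.Semiconj.inverses_right hab β.right_inv β.left_inv x).symm
  have hβ'α' : ∀ x, β.symm (α.symm x) = α.symm (β.symm x) :=
    Function.Semiconj.inverses_right hβ'α α.right_inv α.left_inv
  have hSα' : ∀ x, S (α.symm x) = α.symm (S x) :=
    Function.Semiconj.inverses_right hSα α.right_inv α.left_inv
  have hSβ' : ∀ x, S (β.symm x) = β.symm (S x) :=
    Function.Semiconj.inverses_right hSβ β.right_inv β.left_inv
  apply α.injective
  simpa [hαm, hβm, hSα, hSβ, hSα', hSβ', hβα, hβα', hβ'α, hβ'α'] using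
    congr($key (α (β a) ⊗ₜ α (α b)))

theorem conv_comul_antipode_comul
    (hΔmult : Δ ∘ₗ lift μ =
      map (lift μ) (lift μ) ∘ₗ (tensorTensorTensorComm k H H H H).toLinearMap ∘ₗ map Δ Δ)
    (hΔ1 : Δ one = one ⊗ₜ[k] one)
    (hS_left : lift μ ∘ₗ map S LinearMap.id ∘ₗ Δ = toSpanSingleton k H one ∘ₗ ε) :
    conv (tensorMul (lift μ) (lift μ)) Δ (Δ ∘ₗ S) Δ =
      toSpanSingleton k (H ⊗[k] H) (one ⊗ₜ one) ∘ₗ ε := by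
  refine LinearMap.ext fun c => ?_
  have hΔ (t : H ⊗[k] H) : Δ (lift μ t) = tensorMul (lift μ) (lift μ) (map Δ Δ t) :=
    congr($hΔmult t)
  have hSl : lift μ (map S LinearMap.id (Δ c)) = ε c • one := congr($hS_left c)
  calc conv (tensorMul (lift μ) (lift μ)) Δ (Δ ∘ₗ S) Δ c
      = Δ (lift μ (map S LinearMap.id (Δ c))) := by rw [hΔ, map_map]; rfl
    _ = _ := by simp [hSl, hΔ1]

theorem conv_comul_antipode_swap
    (hαm : ∀ a b : H, α (μ a b) = μ (α a) (α b)) (hα1 : α one = one)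
    (hcoassoc : (TensorProduct.assoc k H H H).toLinearMap ∘ₗ map Δ β.symm.toLinearMap ∘ₗ Δ =
      map α.symm.toLinearMap Δ ∘ₗ Δ)
    (hβΔ : map β.toLinearMap β.toLinearMap ∘ₗ Δ = Δ ∘ₗ β.toLinearMap)
    (hωΔ : map α.symm.toLinearMap α.symm.toLinearMap ∘ₗ Δ = Δ ∘ₗ α.symm.toLinearMap)
    (hεα : ∀ a : H, ε (α a) = ε a)
    (hcounit_l : (TensorProduct.lid k H).toLinearMap ∘ₗ map ε LinearMap.id ∘ₗ Δ =
      β.symm.toLinearMap)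
    (hSα : ∀ a : H, S (α a) = α (S a))
    (hS_right : lift μ ∘ₗ map LinearMap.id S ∘ₗ Δ = toSpanSingleton k H one ∘ₗ ε) :
    conv (tensorMul (lift μ) (lift μ)) Δ Δ
        (map (S ∘ₗ α.symm.toLinearMap ∘ₗ β.toLinearMap)
          (S ∘ₗ α.toLinearMap ∘ₗ β.symm.toLinearMap) ∘ₗ
            (TensorProduct.comm k H H).toLinearMap ∘ₗ Δ) =
      toSpanSingleton k (H ⊗[k] H) (one ⊗ₜ one) ∘ₗ ε := by
  set G := map (S ∘ₗ α.symm.toLinearMap ∘ₗ β.toLinearMap)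
    (S ∘ₗ α.toLinearMap ∘ₗ β.symm.toLinearMap) ∘ₗ (TensorProduct.comm k H H).toLinearMap with hG
  set Ξ : H ⊗[k] (H ⊗[k] H) →ₗ[k] H ⊗[k] H :=
    map (lift μ ∘ₗ map LinearMap.id (S ∘ₗ α.symm.toLinearMap ∘ₗ β.toLinearMap)) α.toLinearMap ∘ₗ
      (TensorProduct.assoc k H H H).symm.toLinearMap ∘ₗ
        lTensor H (TensorProduct.comm k H H).toLinearMap
    with hΞ
  -- After rearranging by `map_comul_comul_comul`, the middle factors `α c₂₁₁ ⊗ β c₂₁₂` meet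
  -- as `α (c₂₁₁ S(c₂₁₂))`, which the antipode axiom collapses.
  have hshuffle : tensorMul (lift μ) (lift μ) ∘ₗ lTensor _ G ∘ₗ
      (TensorProduct.assoc k H H (H ⊗[k] H)).symm.toLinearMap ∘ₗ
        map α.symm.toLinearMap ((TensorProduct.assoc k H H H).toLinearMap ∘ₗ
          map (map α.toLinearMap β.toLinearMap) LinearMap.id) =
      Ξ ∘ₗ map α.symm.toLinearMap (map (lift μ ∘ₗ map LinearMap.id S) LinearMap.id) := by
    ext x y z w
    simp [hΞ, hG, hαm, hSα]
  have hcollapse : map (lift μ ∘ₗ map LinearMap.id S) LinearMap.id ∘ₗ map Δ LinearMap.id ∘ₗ Δ =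
      mk k H H one ∘ₗ β.symm.toLinearMap := by
    have hunit : map (toSpanSingleton k H one ∘ₗ ε) LinearMap.id =
        mk k H H one ∘ₗ (TensorProduct.lid k H).toLinearMap ∘ₗ map ε LinearMap.id := by
      ext x y
      simp [smul_tmul]
    calc _ = map (lift μ ∘ₗ map LinearMap.id S ∘ₗ Δ) LinearMap.id ∘ₗ Δ := by
          rw [← comp_assoc, ← map_comp, comp_id, comp_assoc]
      _ = _ := by rw [hS_right, hunit, comp_assoc, comp_assoc, hcounit_l]
  have hfinal : Ξ ∘ₗ map α.symm.toLinearMap (mk k H H one ∘ₗ β.symm.toLinearMap) =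
      (mk k H H).flip one ∘ₗ lift μ ∘ₗ map α.symm.toLinearMap (S ∘ₗ α.symm.toLinearMap) := by
    ext x y
    simp [hΞ, hα1]
  refine LinearMap.ext fun c => ?_
  calc conv (tensorMul (lift μ) (lift μ)) Δ Δ (G ∘ₗ Δ) c
      = tensorMul (lift μ) (lift μ) (lTensor _ G (map Δ Δ (Δ c))) := by rw [lTensor_map]; rfl
    _ = Ξ (map α.symm.toLinearMap (map (lift μ ∘ₗ map LinearMap.id S) LinearMap.id ∘ₗ
          map Δ LinearMap.id ∘ₗ Δ) (Δ c)) := by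
        rw [map_comul_comul_comul hcoassoc hβΔ α.comp_symm β.comp_symm]
        exact congr($hshuffle _).trans (by rw [comp_apply, map_map, comp_id])
    _ = _ := by
        rw [hcollapse, show Ξ _ = _ from congr($hfinal (Δ c)), comp_apply, comp_apply,
          mul_map_symm_antipode_comul hωΔ hεα hS_right c]
        simp [smul_tmul']

theorem comul_antipode (hab : ∀ a : H, α (β a) = β (α a))
    (hαm : ∀ a b : H, α (μ a b) = μ (α a) (α b))
    (hassoc : ∀ a b c : H, μ (α a) (μ b c) = μ (μ a b) (β c))
    (hψΔ : map β.symm.toLinearMap β.symm.toLinearMap ∘ₗ Δ = Δ ∘ₗ β.symm.toLinearMap)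
    (hωΔ : map α.symm.toLinearMap α.symm.toLinearMap ∘ₗ Δ = Δ ∘ₗ α.symm.toLinearMap)
    (hcoassoc : (TensorProduct.assoc k H H H).toLinearMap ∘ₗ map Δ β.symm.toLinearMap ∘ₗ Δ =
      map α.symm.toLinearMap Δ ∘ₗ Δ)
    (hΔmult : Δ ∘ₗ lift μ =
      map (lift μ) (lift μ) ∘ₗ (tensorTensorTensorComm k H H H H).toLinearMap ∘ₗ map Δ Δ)
    (hαΔ : map α.toLinearMap α.toLinearMap ∘ₗ Δ = Δ ∘ₗ α.toLinearMap)
    (hβΔ : map β.toLinearMap β.toLinearMap ∘ₗ Δ = Δ ∘ₗ β.toLinearMap)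
    (hα1 : α one = one) (hr1 : ∀ a : H, μ a one = α a) (hl1 : ∀ a : H, μ one a = β a)
    (hΔ1 : Δ one = one ⊗ₜ[k] one) (hεα : ∀ a : H, ε (α a) = ε a)
    (hcounit_r : (TensorProduct.rid k H).toLinearMap ∘ₗ map LinearMap.id ε ∘ₗ Δ =
      α.symm.toLinearMap)
    (hcounit_l : (TensorProduct.lid k H).toLinearMap ∘ₗ map ε LinearMap.id ∘ₗ Δ =
      β.symm.toLinearMap)
    (hSα : ∀ a : H, S (α a) = α (S a)) (hSβ : ∀ a : H, S (β a) = β (S a))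
    (hS_left : lift μ ∘ₗ map S LinearMap.id ∘ₗ Δ = toSpanSingleton k H one ∘ₗ ε)
    (hS_right : lift μ ∘ₗ map LinearMap.id S ∘ₗ Δ = toSpanSingleton k H one ∘ₗ ε) :
    map α.toLinearMap β.toLinearMap ∘ₗ Δ ∘ₗ S =
      map β.toLinearMap α.toLinearMap ∘ₗ (TensorProduct.comm k H H).toLinearMap ∘ₗ
        map S S ∘ₗ Δ := by
  have hassoc' (p q r : H) :
      lift μ (α p ⊗ₜ lift μ (q ⊗ₜ r)) = lift μ (lift μ (p ⊗ₜ q) ⊗ₜ β r) := by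
    simpa using hassoc p q r
  have hf : (Δ ∘ₗ S) ∘ₗ α.toLinearMap = map α.toLinearMap α.toLinearMap ∘ₗ Δ ∘ₗ S := by
    refine LinearMap.ext fun x => ?_
    simpa [hSα] using congr($hαΔ (S x)).symm
  have key := left_inv_eq_right_inv (αA := map α.toLinearMap α.toLinearMap)
    (βA := map β.toLinearMap β.toLinearMap) (tensorMul_assoc hassoc' hassoc') hcoassoc α.comp_symm
    (tensorMul_one_left (fun a => by simpa using hl1 a) (fun a => by simpa using hl1 a))
    (tensorMul_one_right (fun a => by simpa using hr1 a) (fun a => by simpa using hr1 a))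
    hcounit_l hcounit_r hf (conv_comul_antipode_comul hΔmult hΔ1 hS_left)
    (conv_comul_antipode_swap hαm hα1 hcoassoc hβΔ hωΔ hεα hcounit_l hSα hS_right)
  have hβα (x : H) : β (α x) = α (β x) := (hab x).symm
  have hβ'α (x : H) : β.symm (α x) = α (β.symm x) :=
    (Function.Semiconj.inverses_right hab β.right_inv β.left_inv x).symm
  have hSβ' : ∀ x, S (β.symm x) = β.symm (S x) :=
    Function.Semiconj.inverses_right hSβ β.right_inv β.left_inv
  refine LinearMap.ext fun x => ?_
  have hx := congr($key (α x))
  have hΔβ (y : H) : Δ (β.symm y) = map β.symm.toLinearMap β.symm.toLinearMap (Δ y) :=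
    congr($hψΔ y).symm
  have hΔα (y : H) : Δ (α y) = map α.toLinearMap α.toLinearMap (Δ y) := congr($hαΔ y).symm
  simp only [coe_comp, LinearEquiv.coe_coe, Function.comp_apply, LinearEquiv.symm_apply_apply,
    LinearEquiv.comp_coe, hΔβ, hΔα, map_map] at hx
  calc map α.toLinearMap β.toLinearMap (Δ (S x))
      = map LinearMap.id (β.toLinearMap ∘ₗ α.symm.toLinearMap)
          (map α.toLinearMap α.toLinearMap (Δ (S x))) := by
        rw [map_map]; congr 1; ext; simp
    _ = _ := by
        rw [hx]
        simp only [coe_comp, Function.comp_apply, LinearEquiv.coe_coe, map_map, map_comm]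
        congr 2
        ext y
        simp [hβα, hβ'α, hSα, hSβ']

end MonoidalBiHomHopf

end BiHom

theorem monoidal_biHom_hopf_antipode_properties_general (k H : Type*) [Field k]
    [AddCommGroup H] [Module k H]
    (μ : H →ₗ[k] H →ₗ[k] H) (Δ : H →ₗ[k] H ⊗[k] H)
    (α β : H ≃ₗ[k] H) (one : H) (ε : H →ₗ[k] k) (S : H →ₗ[k] H)
    -- BiHom-associative algebra axioms
    (hab : ∀ a : H, α (β a) = β (α a))
    (hαm : ∀ a b : H, α (μ a b) = μ (α a) (α b))
    (hβm : ∀ a b : H, β (μ a b) = μ (β a) (β b))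
    (hassoc : ∀ a b c : H, μ (α a) (μ b c) = μ (μ a b) (β c))
    -- BiHom-coassociative coalgebra axioms, with ψ = β⁻¹ and ω = α⁻¹
    (hψΔ : (TensorProduct.map β.symm.toLinearMap β.symm.toLinearMap) ∘ₗ Δ =
      Δ ∘ₗ β.symm.toLinearMap)
    (hωΔ : (TensorProduct.map α.symm.toLinearMap α.symm.toLinearMap) ∘ₗ Δ =
      Δ ∘ₗ α.symm.toLinearMap)
    (hcoassoc : (TensorProduct.assoc k H H H).toLinearMap ∘ₗ
      (TensorProduct.map Δ β.symm.toLinearMap) ∘ₗ Δ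
      = (TensorProduct.map α.symm.toLinearMap Δ) ∘ₗ Δ)
    -- BiHom-bialgebra axioms
    (hΔmult : Δ ∘ₗ TensorProduct.lift μ =
      (TensorProduct.map (TensorProduct.lift μ) (TensorProduct.lift μ)) ∘ₗ
        (TensorProduct.tensorTensorTensorComm k H H H H).toLinearMap ∘ₗ
        (TensorProduct.map Δ Δ))
    (hαΔ : (TensorProduct.map α.toLinearMap α.toLinearMap) ∘ₗ Δ = Δ ∘ₗ α.toLinearMap)
    (hβΔ : (TensorProduct.map β.toLinearMap β.toLinearMap) ∘ₗ Δ = Δ ∘ₗ β.toLinearMap)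
    -- unit axioms
    (hα1 : α one = one)
    (hr1 : ∀ a : H, μ a one = α a) (hl1 : ∀ a : H, μ one a = β a)
    (hΔ1 : Δ one = one ⊗ₜ[k] one)
    -- counit axioms
    (hεα : ∀ a : H, ε (α a) = ε a)
    (hcounit_r : (TensorProduct.rid k H).toLinearMap ∘ₗ
      (TensorProduct.map (LinearMap.id : H →ₗ[k] H) ε) ∘ₗ Δ = α.symm.toLinearMap)
    (hcounit_l : (TensorProduct.lid k H).toLinearMap ∘ₗ
      (TensorProduct.map ε (LinearMap.id : H →ₗ[k] H)) ∘ₗ Δ = β.symm.toLinearMap)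
    (hε1 : ε one = 1) (hεm : ∀ a b : H, ε (μ a b) = ε a * ε b)
    -- antipode axioms
    (hSα : ∀ a : H, S (α a) = α (S a)) (hSβ : ∀ a : H, S (β a) = β (S a))
    (hS_left : (TensorProduct.lift μ) ∘ₗ
      (TensorProduct.map S (LinearMap.id : H →ₗ[k] H)) ∘ₗ Δ =
      (LinearMap.toSpanSingleton k H one) ∘ₗ ε)
    (hS_right : (TensorProduct.lift μ) ∘ₗ
      (TensorProduct.map (LinearMap.id : H →ₗ[k] H) S) ∘ₗ Δ =
      (LinearMap.toSpanSingleton k H one) ∘ₗ ε) :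
    (S one = one) ∧ (∀ h : H, ε (S h) = ε h) ∧
    (∀ a b : H, S (μ (β a) (α b)) = μ (S (β b)) (S (α a))) ∧
    ((TensorProduct.map α.toLinearMap β.toLinearMap) ∘ₗ Δ ∘ₗ S =
      (TensorProduct.map β.toLinearMap α.toLinearMap) ∘ₗ
        (TensorProduct.comm k H H).toLinearMap ∘ₗ (TensorProduct.map S S) ∘ₗ Δ) :=
  ⟨BiHom.antipode_one hα1 hr1 hΔ1 hε1 hS_left,
    BiHom.counit_antipode hεα hε1 hεm hcounit_r hS_left,
    BiHom.antipode_mul_antidistrib hab hαm hβm hassoc hcoassoc hΔmult hωΔ hα1 hr1 hl1 hεα hεm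
      hcounit_r hcounit_l hSα hSβ hS_left hS_right,
    BiHom.comul_antipode hab hαm hassoc hψΔ hωΔ hcoassoc hΔmult hαΔ hβΔ hα1 hr1 hl1 hΔ1 hεα
      hcounit_r hcounit_l hSα hSβ hS_left hS_right⟩

/-- In a monoidal BiHom-Hopf algebra `(H, μ, Δ, α, β, 1, ε, S)` (a unital
counital BiHom-bialgebra with `ω = α⁻¹`, `ψ = β⁻¹` and antipode `S`):
(i) `S(1) = 1` and `ε ∘ S = ε`; (ii) `S(β(a)α(b)) = S(β(b))S(α(a))`;
(iii) `α(S(h)₁) ⊗ β(S(h)₂) = β(S(h₂)) ⊗ α(S(h₁))`. -/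
theorem monoidal_biHom_hopf_antipode_properties (k H : Type*) [Field k]
    [AddCommGroup H] [Module k H]
    (μ : H →ₗ[k] H →ₗ[k] H) (Δ : H →ₗ[k] H ⊗[k] H)
    (α β : H ≃ₗ[k] H) (one : H) (ε : H →ₗ[k] k) (S : H →ₗ[k] H)
    -- BiHom-associative algebra axioms
    (hab : ∀ a : H, α (β a) = β (α a))
    (hαm : ∀ a b : H, α (μ a b) = μ (α a) (α b))
    (hβm : ∀ a b : H, β (μ a b) = μ (β a) (β b))
    (hassoc : ∀ a b c : H, μ (α a) (μ b c) = μ (μ a b) (β c))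
    -- BiHom-coassociative coalgebra axioms, with ψ = β⁻¹ and ω = α⁻¹
    (hψΔ : (TensorProduct.map β.symm.toLinearMap β.symm.toLinearMap) ∘ₗ Δ =
      Δ ∘ₗ β.symm.toLinearMap)
    (hωΔ : (TensorProduct.map α.symm.toLinearMap α.symm.toLinearMap) ∘ₗ Δ =
      Δ ∘ₗ α.symm.toLinearMap)
    (hcoassoc : (TensorProduct.assoc k H H H).toLinearMap ∘ₗ
      (TensorProduct.map Δ β.symm.toLinearMap) ∘ₗ Δ
      = (TensorProduct.map α.symm.toLinearMap Δ) ∘ₗ Δ)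
    -- BiHom-bialgebra axioms
    (hΔmult : Δ ∘ₗ TensorProduct.lift μ =
      (TensorProduct.map (TensorProduct.lift μ) (TensorProduct.lift μ)) ∘ₗ
        (TensorProduct.tensorTensorTensorComm k H H H H).toLinearMap ∘ₗ
        (TensorProduct.map Δ Δ))
    (hαΔ : (TensorProduct.map α.toLinearMap α.toLinearMap) ∘ₗ Δ = Δ ∘ₗ α.toLinearMap)
    (hβΔ : (TensorProduct.map β.toLinearMap β.toLinearMap) ∘ₗ Δ = Δ ∘ₗ β.toLinearMap)
    (hψm : ∀ a b : H, β.symm (μ a b) = μ (β.symm a) (β.symm b))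
    (hωm : ∀ a b : H, α.symm (μ a b) = μ (α.symm a) (α.symm b))
    -- unit axioms
    (hα1 : α one = one) (hβ1 : β one = one)
    (hr1 : ∀ a : H, μ a one = α a) (hl1 : ∀ a : H, μ one a = β a)
    (hΔ1 : Δ one = one ⊗ₜ[k] one)
    -- counit axioms
    (hεα : ∀ a : H, ε (α a) = ε a) (hεβ : ∀ a : H, ε (β a) = ε a)
    (hcounit_r : (TensorProduct.rid k H).toLinearMap ∘ₗ
      (TensorProduct.map (LinearMap.id : H →ₗ[k] H) ε) ∘ₗ Δ = α.symm.toLinearMap)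
    (hcounit_l : (TensorProduct.lid k H).toLinearMap ∘ₗ
      (TensorProduct.map ε (LinearMap.id : H →ₗ[k] H)) ∘ₗ Δ = β.symm.toLinearMap)
    (hε1 : ε one = 1) (hεm : ∀ a b : H, ε (μ a b) = ε a * ε b)
    -- antipode axioms
    (hSα : ∀ a : H, S (α a) = α (S a)) (hSβ : ∀ a : H, S (β a) = β (S a))
    (hS_left : (TensorProduct.lift μ) ∘ₗ
      (TensorProduct.map S (LinearMap.id : H →ₗ[k] H)) ∘ₗ Δ =
      (LinearMap.toSpanSingleton k H one) ∘ₗ ε)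
    (hS_right : (TensorProduct.lift μ) ∘ₗ
      (TensorProduct.map (LinearMap.id : H →ₗ[k] H) S) ∘ₗ Δ =
      (LinearMap.toSpanSingleton k H one) ∘ₗ ε) :
    (S one = one) ∧ (∀ h : H, ε (S h) = ε h) ∧
    (∀ a b : H, S (μ (β a) (α b)) = μ (S (β b)) (S (α a))) ∧
    ((TensorProduct.map α.toLinearMap β.toLinearMap) ∘ₗ Δ ∘ₗ S =
      (TensorProduct.map β.toLinearMap α.toLinearMap) ∘ₗ
        (TensorProduct.comm k H H).toLinearMap ∘ₗ (TensorProduct.map S S) ∘ₗ Δ) :=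
  monoidal_biHom_hopf_antipode_properties_general k H μ Δ α β one ε S hab hαm hβm hassoc hψΔ hωΔ
    hcoassoc hΔmult hαΔ hβΔ hα1 hr1 hl1 hΔ1 hεα hcounit_r hcounit_l hε1 hεm hSα hSβ hS_left hS_right
end

section
/- Let H = k[X] with its usual bialgebra structure (X primitive), α : H → H the algebra map with α(X) = X², β = ψ = ω = id, and let H_{(α,β,ψ,ω)} be the resulting BiHom-bialgebra with multiplication μ∘(α⊗id) and comultiplication Δ. Then there exists no linear map S : H → H satisfying μ_{(α,β)}∘(S⊗id)∘Δ = μ_{(α,β)}∘(id⊗S)∘Δ = η∘ε. -/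
open scoped TensorProduct
open Polynomial

noncomputable section

variable (k : Type*) [Field k]

/-- The standard comultiplication of the polynomial bialgebra `k[X]`, `Δ(X) = 1⊗X + X⊗1`. -/
def polyComul : Polynomial k →ₐ[k] (Polynomial k ⊗[k] Polynomial k) :=
  Polynomial.aeval ((1 : Polynomial k) ⊗ₜ[k] (X : Polynomial k) +
    (X : Polynomial k) ⊗ₜ[k] (1 : Polynomial k))

/-- The standard counit of the polynomial bialgebra `k[X]`, `ε(X) = 0`. -/
def polyCounit : Polynomial k →ₐ[k] k := Polynomial.aeval (0 : k)

/-- The twisted multiplication `μ_{(α,β)} = μ ∘ (α ⊗ id)` of `k[X]`, where `α(X) = X²`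
and `β = id`, as a linear map `k[X] ⊗ k[X] → k[X]`. -/
def twistedPolyMul : (Polynomial k ⊗[k] Polynomial k) →ₗ[k] Polynomial k :=
  TensorProduct.lift ((LinearMap.mul k (Polynomial k)) ∘ₗ
    (Polynomial.aeval ((X : Polynomial k) ^ 2)).toLinearMap)

lemma aevalXsq_coeff_one {k : Type*} [Field k] (p : Polynomial k) :
    ((Polynomial.aeval ((X : Polynomial k) ^ 2)) p).coeff 1 = 0 := by
  induction p using Polynomial.induction_on' with
  | add p q hp hq => simp [map_add, hp, hq]
  | monomial n a =>
    rw [Polynomial.aeval_monomial, ← pow_mul, ← Polynomial.C_eq_algebraMap,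
      Polynomial.coeff_C_mul, Polynomial.coeff_X_pow]
    have : ¬ (1 = 2 * n) := by omega
    simp [this]

/-- For `H = k[X]` with its usual bialgebra structure, `α(X) = X²`,
`β = ψ = ω = id`, the resulting BiHom-bialgebra `H_{(α,β,ψ,ω)}` admits no linear map
`S : H → H` with `μ_{(α,β)} ∘ (S⊗id) ∘ Δ = μ_{(α,β)} ∘ (id⊗S) ∘ Δ = η ∘ ε`. -/
theorem twisted_polynomial_bialgebra_has_no_antipode :
    ¬ ∃ S : Polynomial k →ₗ[k] Polynomial k,
      (twistedPolyMul k) ∘ₗ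
        (TensorProduct.map S (LinearMap.id : Polynomial k →ₗ[k] Polynomial k)) ∘ₗ
        (polyComul k).toLinearMap =
          (LinearMap.toSpanSingleton k (Polynomial k) 1) ∘ₗ (polyCounit k).toLinearMap ∧
      (twistedPolyMul k) ∘ₗ
        (TensorProduct.map (LinearMap.id : Polynomial k →ₗ[k] Polynomial k) S) ∘ₗ
        (polyComul k).toLinearMap =
          (LinearMap.toSpanSingleton k (Polynomial k) 1) ∘ₗ (polyCounit k).toLinearMap := by
  rintro ⟨S, h1, -⟩
  have key : ∀ a b : Polynomial k,
      twistedPolyMul k (a ⊗ₜ[k] b) = (Polynomial.aeval ((X : Polynomial k) ^ 2)) a * b := by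
    intro a b; rfl
  have e1 := LinearMap.congr_fun h1 1
  have e2 := LinearMap.congr_fun h1 X
  simp only [LinearMap.comp_apply, AlgHom.toLinearMap_apply, polyComul, polyCounit,
    map_one, Polynomial.aeval_X, TensorProduct.map_tmul, map_add, LinearMap.id_apply,
    key, LinearMap.toSpanSingleton_apply, Polynomial.aeval_one] at e1 e2
  rw [Algebra.TensorProduct.one_def, TensorProduct.map_tmul, key] at e1
  simp only [LinearMap.id_apply, mul_one, one_smul, zero_smul] at e1 e2
  rw [e1, one_mul] at e2
  have := congrArg (fun p => Polynomial.coeff p 1) e2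
  simp [aevalXsq_coeff_one] at this

end
end

section
/- Let (D, μ, α̃, β̃) be a BiHom-associative algebra, α, β : D → D multiplicative linear maps such that any two of α̃, β̃, α, β commute, and T : D⊗D → D⊗D a linear map with companions T̃₁, T̃₂ : D⊗D⊗D → D⊗D⊗D satisfying: (α⊗α)∘T = T∘(α⊗α), (β⊗β)∘T = T∘(β⊗β), (α̃⊗α̃)∘T = T∘(α̃⊗α̃), (β̃⊗β̃)∘T = T∘(β̃⊗β̃), T∘(α̃⊗μ) = (α̃⊗μ)∘T̃₁∘(T⊗id), T∘(μ⊗β̃) = (μ⊗β̃)∘T̃₂∘(id⊗T), and T̃₁∘(T⊗id)∘(α⊗T) = T̃₂∘(id⊗T)∘(T⊗β). Then (D, μ∘T, α̃∘α, β̃∘β) is a BiHom-associative algebra. -/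
open scoped TensorProduct

/-- Twisting a BiHom-associative algebra `(D, μ, α̃, β̃)` by an
`(α,β)`-BiHom-pseudotwistor `T` with companions `T̃₁, T̃₂` yields the BiHom-associative
algebra `(D, μ∘T, α̃∘α, β̃∘β)`. -/
theorem biHom_pseudotwistor (k D : Type*) [Field k] [AddCommGroup D] [Module k D]
    (μ : D →ₗ[k] D →ₗ[k] D) (αt βt α β : D →ₗ[k] D)
    -- BiHom-associative algebra axioms for (D, μ, α̃, β̃)
    (h1 : ∀ a : D, αt (βt a) = βt (αt a))
    (hαt : ∀ a b : D, αt (μ a b) = μ (αt a) (αt b))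
    (hβt : ∀ a b : D, βt (μ a b) = μ (βt a) (βt b))
    (hassoc : ∀ a b c : D, μ (αt a) (μ b c) = μ (μ a b) (βt c))
    -- α, β multiplicative, any two of α̃, β̃, α, β commute
    (hα : ∀ a b : D, α (μ a b) = μ (α a) (α b))
    (hβ : ∀ a b : D, β (μ a b) = μ (β a) (β b))
    (h2 : ∀ a : D, αt (α a) = α (αt a)) (h3 : ∀ a : D, αt (β a) = β (αt a))
    (h4 : ∀ a : D, βt (α a) = α (βt a)) (h5 : ∀ a : D, βt (β a) = β (βt a))
    (h6 : ∀ a : D, α (β a) = β (α a))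
    (T : D ⊗[k] D →ₗ[k] D ⊗[k] D)
    (T1 T2 : (D ⊗[k] D) ⊗[k] D →ₗ[k] (D ⊗[k] D) ⊗[k] D)
    (hTα : (TensorProduct.map α α) ∘ₗ T = T ∘ₗ (TensorProduct.map α α))
    (hTβ : (TensorProduct.map β β) ∘ₗ T = T ∘ₗ (TensorProduct.map β β))
    (hTαt : (TensorProduct.map αt αt) ∘ₗ T = T ∘ₗ (TensorProduct.map αt αt))
    (hTβt : (TensorProduct.map βt βt) ∘ₗ T = T ∘ₗ (TensorProduct.map βt βt))
    (hpstw1 : T ∘ₗ (TensorProduct.map αt (TensorProduct.lift μ)) ∘ₗ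
        (TensorProduct.assoc k D D D).toLinearMap =
      (TensorProduct.map αt (TensorProduct.lift μ)) ∘ₗ
        (TensorProduct.assoc k D D D).toLinearMap ∘ₗ T1 ∘ₗ
        (TensorProduct.map T (LinearMap.id : D →ₗ[k] D)))
    (hpstw2 : T ∘ₗ (TensorProduct.map (TensorProduct.lift μ) βt) =
      (TensorProduct.map (TensorProduct.lift μ) βt) ∘ₗ T2 ∘ₗ
        (TensorProduct.assoc k D D D).symm.toLinearMap ∘ₗ
        (TensorProduct.map (LinearMap.id : D →ₗ[k] D) T) ∘ₗ
        (TensorProduct.assoc k D D D).toLinearMap)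
    (hpstw3 : T1 ∘ₗ (TensorProduct.map T (LinearMap.id : D →ₗ[k] D)) ∘ₗ
        (TensorProduct.assoc k D D D).symm.toLinearMap ∘ₗ
        (TensorProduct.map α T) ∘ₗ (TensorProduct.assoc k D D D).toLinearMap =
      T2 ∘ₗ (TensorProduct.assoc k D D D).symm.toLinearMap ∘ₗ
        (TensorProduct.map (LinearMap.id : D →ₗ[k] D) T) ∘ₗ
        (TensorProduct.assoc k D D D).toLinearMap ∘ₗ
        (TensorProduct.map T β)) :
    ∀ ν : D → D → D, (ν = fun a b => TensorProduct.lift μ (T (a ⊗ₜ[k] b))) →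
      ((∀ a : D, αt (α (βt (β a))) = βt (β (αt (α a)))) ∧
       (∀ a b : D, αt (α (ν a b)) = ν (αt (α a)) (αt (α b))) ∧
       (∀ a b : D, βt (β (ν a b)) = ν (βt (β a)) (βt (β b))) ∧
       (∀ a b c : D, ν (αt (α a)) (ν b c) = ν (ν a b) (βt (β c)))) := by
  intro ν hν
  subst hν
  set m := TensorProduct.lift μ with hm
  have hmul : ∀ (f : D →ₗ[k] D), (∀ a b, f (μ a b) = μ (f a) (f b)) →
      f ∘ₗ m = m ∘ₗ TensorProduct.map f f := by
    intro f hf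
    apply TensorProduct.ext'
    intro a b
    simp [hm, hf]
  have hmαt := hmul αt hαt
  have hmα := hmul α hα
  have hmβt := hmul βt hβt
  have hmβ := hmul β hβ
  refine ⟨?_, ?_, ?_, ?_⟩
  · intro a
    rw [← h4, h1, h6, h3]
  · intro a b
    have e1 := DFunLike.congr_fun hmα (T (a ⊗ₜ[k] b))
    have e3 := DFunLike.congr_fun hTα (a ⊗ₜ[k] b)
    have e2 := DFunLike.congr_fun hmαt (T ((TensorProduct.map α α) (a ⊗ₜ[k] b)))
    have e4 := DFunLike.congr_fun hTαt ((TensorProduct.map α α) (a ⊗ₜ[k] b))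
    simp only [LinearMap.comp_apply] at e1 e2 e3 e4
    rw [e1, e3, e2, e4]
    simp only [TensorProduct.map_tmul]
  · intro a b
    have e1 := DFunLike.congr_fun hmβ (T (a ⊗ₜ[k] b))
    have e3 := DFunLike.congr_fun hTβ (a ⊗ₜ[k] b)
    have e2 := DFunLike.congr_fun hmβt (T ((TensorProduct.map β β) (a ⊗ₜ[k] b)))
    have e4 := DFunLike.congr_fun hTβt ((TensorProduct.map β β) (a ⊗ₜ[k] b))
    simp only [LinearMap.comp_apply] at e1 e2 e3 e4
    rw [e1, e3, e2, e4]
    simp only [TensorProduct.map_tmul]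
  · intro a b c
    -- BiHom-associativity of μ as a linear map identity
    have hA : m ∘ₗ (TensorProduct.map αt m) ∘ₗ (TensorProduct.assoc k D D D).toLinearMap
        = m ∘ₗ TensorProduct.map m βt := by
      apply TensorProduct.ext_threefold
      intro x y z
      simp [hm, hassoc]
    -- key: equality of the two inner elements via hpstw3
    have key := DFunLike.congr_fun hpstw3 ((a ⊗ₜ[k] b) ⊗ₜ[k] c)
    simp only [LinearMap.comp_apply, LinearEquiv.coe_coe, TensorProduct.assoc_tmul,
      TensorProduct.map_tmul, LinearMap.id_coe, id_eq] at key
    -- hpstw1 applied pointwise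
    have e1 := DFunLike.congr_fun hpstw1
      ((TensorProduct.assoc k D D D).symm ((α a) ⊗ₜ[k] (T (b ⊗ₜ[k] c))))
    simp only [LinearMap.comp_apply, LinearEquiv.coe_coe, LinearEquiv.apply_symm_apply,
      TensorProduct.map_tmul] at e1
    -- hpstw2 applied pointwise
    have e2 := DFunLike.congr_fun hpstw2 ((T (a ⊗ₜ[k] b)) ⊗ₜ[k] (β c))
    simp only [LinearMap.comp_apply, LinearEquiv.coe_coe, TensorProduct.map_tmul] at e2
    -- assemble
    have hAL := DFunLike.congr_fun hA
      (T1 ((TensorProduct.map T LinearMap.id)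
        ((TensorProduct.assoc k D D D).symm ((α a) ⊗ₜ[k] (T (b ⊗ₜ[k] c))))))
    have hAR := DFunLike.congr_fun hA
      (T2 ((TensorProduct.assoc k D D D).symm
        ((TensorProduct.map LinearMap.id T)
          ((TensorProduct.assoc k D D D) ((T (a ⊗ₜ[k] b)) ⊗ₜ[k] (β c))))))
    simp only [LinearMap.comp_apply, LinearEquiv.coe_coe] at hAL hAR
    calc m (T ((αt (α a)) ⊗ₜ[k] (m (T (b ⊗ₜ[k] c)))))
        = m ((TensorProduct.map αt m) ((TensorProduct.assoc k D D D)
            (T1 ((TensorProduct.map T LinearMap.id)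
              ((TensorProduct.assoc k D D D).symm ((α a) ⊗ₜ[k] (T (b ⊗ₜ[k] c)))))))) := by
          rw [e1]
      _ = m ((TensorProduct.map m βt)
            (T1 ((TensorProduct.map T LinearMap.id)
              ((TensorProduct.assoc k D D D).symm ((α a) ⊗ₜ[k] (T (b ⊗ₜ[k] c))))))) := hAL
      _ = m ((TensorProduct.map m βt)
            (T2 ((TensorProduct.assoc k D D D).symm
              ((TensorProduct.map LinearMap.id T)
                ((TensorProduct.assoc k D D D) ((T (a ⊗ₜ[k] b)) ⊗ₜ[k] (β c))))))) := by
          rw [key]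
      _ = m (T ((m (T (a ⊗ₜ[k] b))) ⊗ₜ[k] (βt (β c)))) := by rw [← e2]
end

section
/- Let (A, μ_A, α_A, β_A) and (B, μ_B, α_B, β_B) be BiHom-associative algebras with bijective structure maps, and R : B⊗A → A⊗B a BiHom-twisting map, written R(b⊗a) = a_R⊗b_R. Then A⊗B with multiplication (a⊗b)(a'⊗b') = a a'_R ⊗ b_R b' and structure maps α_A⊗α_B, β_A⊗β_B is a BiHom-associative algebra (the BiHom-twisted tensor product A ⊗_R B). -/
open scoped TensorProduct

open TensorProduct LinearMap

/-- Given BiHom-associative algebras `(A, μ_A, α_A, β_A)` and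
`(B, μ_B, α_B, β_B)` with bijective structure maps and a BiHom-twisting map
`R : B ⊗ A → A ⊗ B`, the space `A ⊗ B` with multiplication
`(a⊗b)(a'⊗b') = a a'_R ⊗ b_R b'` and structure maps `α_A⊗α_B`, `β_A⊗β_B` is a
BiHom-associative algebra (the BiHom-twisted tensor product `A ⊗_R B`). -/
theorem biHom_twisted_tensor_product (k A B : Type*) [Field k]
    [AddCommGroup A] [Module k A] [AddCommGroup B] [Module k B]
    (μA : A →ₗ[k] A →ₗ[k] A) (αA βA : A ≃ₗ[k] A)
    (hAcomm : ∀ a : A, αA (βA a) = βA (αA a))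
    (hAα : ∀ a b : A, αA (μA a b) = μA (αA a) (αA b))
    (hAβ : ∀ a b : A, βA (μA a b) = μA (βA a) (βA b))
    (hAassoc : ∀ a b c : A, μA (αA a) (μA b c) = μA (μA a b) (βA c))
    (μB : B →ₗ[k] B →ₗ[k] B) (αB βB : B ≃ₗ[k] B)
    (hBcomm : ∀ b : B, αB (βB b) = βB (αB b))
    (hBα : ∀ a b : B, αB (μB a b) = μB (αB a) (αB b))
    (hBβ : ∀ a b : B, βB (μB a b) = μB (βB a) (βB b))
    (hBassoc : ∀ a b c : B, μB (αB a) (μB b c) = μB (μB a b) (βB c))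
    (R : B ⊗[k] A →ₗ[k] A ⊗[k] B)
    -- BiHom-twisting map conditions
    (hR1 : (TensorProduct.map αA.toLinearMap αB.toLinearMap) ∘ₗ R =
      R ∘ₗ (TensorProduct.map αB.toLinearMap αA.toLinearMap))
    (hR2 : (TensorProduct.map βA.toLinearMap βB.toLinearMap) ∘ₗ R =
      R ∘ₗ (TensorProduct.map βB.toLinearMap βA.toLinearMap))
    (hR3 : R ∘ₗ (TensorProduct.map αB.toLinearMap (TensorProduct.lift μA)) ∘ₗ
        (TensorProduct.assoc k B A A).toLinearMap =
      (TensorProduct.map (TensorProduct.lift μA) βB.toLinearMap) ∘ₗ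
        (TensorProduct.assoc k A A B).symm.toLinearMap ∘ₗ
        (TensorProduct.map (LinearMap.id : A →ₗ[k] A) R) ∘ₗ
        (TensorProduct.assoc k A B A).toLinearMap ∘ₗ
        (TensorProduct.map
          (TensorProduct.map (LinearMap.id : A →ₗ[k] A)
            (αB.toLinearMap ∘ₗ βB.symm.toLinearMap))
          (LinearMap.id : A →ₗ[k] A)) ∘ₗ
        (TensorProduct.map R (LinearMap.id : A →ₗ[k] A)))
    (hR4 : R ∘ₗ (TensorProduct.map (TensorProduct.lift μB) βA.toLinearMap) =
      (TensorProduct.map αA.toLinearMap (TensorProduct.lift μB)) ∘ₗ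
        (TensorProduct.assoc k A B B).toLinearMap ∘ₗ
        (TensorProduct.map R (LinearMap.id : B →ₗ[k] B)) ∘ₗ
        (TensorProduct.assoc k B A B).symm.toLinearMap ∘ₗ
        (TensorProduct.map (LinearMap.id : B →ₗ[k] B)
          (TensorProduct.map (αA.symm.toLinearMap ∘ₗ βA.toLinearMap)
            (LinearMap.id : B →ₗ[k] B))) ∘ₗ
        (TensorProduct.map (LinearMap.id : B →ₗ[k] B) R) ∘ₗ
        (TensorProduct.assoc k B B A).toLinearMap) :
    ∀ m : (A ⊗[k] B) ⊗[k] (A ⊗[k] B) →ₗ[k] A ⊗[k] B,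
      (m = (TensorProduct.map (TensorProduct.lift μA) (TensorProduct.lift μB)) ∘ₗ
        (TensorProduct.assoc k A A (B ⊗[k] B)).symm.toLinearMap ∘ₗ
        (TensorProduct.map (LinearMap.id : A →ₗ[k] A)
          ((TensorProduct.assoc k A B B).toLinearMap ∘ₗ
            (TensorProduct.map R (LinearMap.id : B →ₗ[k] B)) ∘ₗ
            (TensorProduct.assoc k B A B).symm.toLinearMap)) ∘ₗ
        (TensorProduct.assoc k A B (A ⊗[k] B)).toLinearMap) →
      ((TensorProduct.map αA.toLinearMap αB.toLinearMap) ∘ₗ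
          (TensorProduct.map βA.toLinearMap βB.toLinearMap) =
        (TensorProduct.map βA.toLinearMap βB.toLinearMap) ∘ₗ
          (TensorProduct.map αA.toLinearMap αB.toLinearMap)) ∧
      ((TensorProduct.map αA.toLinearMap αB.toLinearMap) ∘ₗ m =
        m ∘ₗ (TensorProduct.map (TensorProduct.map αA.toLinearMap αB.toLinearMap)
          (TensorProduct.map αA.toLinearMap αB.toLinearMap))) ∧
      ((TensorProduct.map βA.toLinearMap βB.toLinearMap) ∘ₗ m =
        m ∘ₗ (TensorProduct.map (TensorProduct.map βA.toLinearMap βB.toLinearMap)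
          (TensorProduct.map βA.toLinearMap βB.toLinearMap))) ∧
      (m ∘ₗ (TensorProduct.map (TensorProduct.map αA.toLinearMap αB.toLinearMap) m) ∘ₗ
          (TensorProduct.assoc k (A ⊗[k] B) (A ⊗[k] B) (A ⊗[k] B)).toLinearMap =
        m ∘ₗ (TensorProduct.map m (TensorProduct.map βA.toLinearMap βB.toLinearMap))) := by
  intro m hm
  -- pointwise versions of the twisting conditions
  have hR1' : ∀ (b : B) (a : A),
      TensorProduct.map αA.toLinearMap αB.toLinearMap (R (b ⊗ₜ a)) = R (αB b ⊗ₜ αA a) := by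
    intro b a
    simpa using LinearMap.congr_fun hR1 (b ⊗ₜ a)
  have hR2' : ∀ (b : B) (a : A),
      TensorProduct.map βA.toLinearMap βB.toLinearMap (R (b ⊗ₜ a)) = R (βB b ⊗ₜ βA a) := by
    intro b a
    simpa using LinearMap.congr_fun hR2 (b ⊗ₜ a)
  set Φ : (A ⊗[k] B) ⊗[k] A →ₗ[k] A ⊗[k] B :=
    (TensorProduct.map (TensorProduct.lift μA) βB.toLinearMap) ∘ₗ
      (TensorProduct.assoc k A A B).symm.toLinearMap ∘ₗ
      (TensorProduct.map (LinearMap.id : A →ₗ[k] A) R) ∘ₗ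
      (TensorProduct.assoc k A B A).toLinearMap ∘ₗ
      (TensorProduct.map (TensorProduct.map (LinearMap.id : A →ₗ[k] A)
        (αB.toLinearMap ∘ₗ βB.symm.toLinearMap)) (LinearMap.id : A →ₗ[k] A)) with hΦ
  set Ψ : B ⊗[k] (A ⊗[k] B) →ₗ[k] A ⊗[k] B :=
    (TensorProduct.map αA.toLinearMap (TensorProduct.lift μB)) ∘ₗ
      (TensorProduct.assoc k A B B).toLinearMap ∘ₗ
      (TensorProduct.map R (LinearMap.id : B →ₗ[k] B)) ∘ₗ
      (TensorProduct.assoc k B A B).symm.toLinearMap ∘ₗ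
      (TensorProduct.map (LinearMap.id : B →ₗ[k] B)
        (TensorProduct.map (αA.symm.toLinearMap ∘ₗ βA.toLinearMap)
          (LinearMap.id : B →ₗ[k] B))) with hΨ
  have hR3' : ∀ (b : B) (a a' : A),
      R (αB b ⊗ₜ μA a a') = Φ (R (b ⊗ₜ a) ⊗ₜ a') := by
    intro b a a'
    have h := LinearMap.congr_fun hR3 ((b ⊗ₜ[k] a) ⊗ₜ[k] a')
    simp only [hΦ, LinearMap.coe_comp, Function.comp_apply, LinearEquiv.coe_coe,
      TensorProduct.assoc_tmul, TensorProduct.map_tmul, TensorProduct.lift.tmul,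
      LinearMap.id_coe, id_eq] at h ⊢
    exact h
  have hR4' : ∀ (b b' : B) (a : A),
      R (μB b b' ⊗ₜ βA a) = Ψ (b ⊗ₜ R (b' ⊗ₜ a)) := by
    intro b b' a
    have h := LinearMap.congr_fun hR4 ((b ⊗ₜ[k] b') ⊗ₜ[k] a)
    simp only [hΨ, LinearMap.coe_comp, Function.comp_apply, LinearEquiv.coe_coe,
      TensorProduct.assoc_tmul, TensorProduct.map_tmul, TensorProduct.lift.tmul,
      LinearMap.id_coe, id_eq] at h ⊢
    exact h
  have key : ∀ (v : B) (u' : A),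
      TensorProduct.map βA.toLinearMap βB.toLinearMap (R (αB (βB.symm v) ⊗ₜ u')) =
      TensorProduct.map αA.toLinearMap αB.toLinearMap (R (v ⊗ₜ αA.symm (βA u'))) := by
    intro v u'
    rw [hR2', hR1', ← hBcomm (βB.symm v)]
    simp
  have hm' : ∀ (a : A) (b : B) (a' : A) (b' : B),
      m ((a ⊗ₜ[k] b) ⊗ₜ[k] (a' ⊗ₜ[k] b')) =
        TensorProduct.map (μA a) (μB.flip b') (R (b ⊗ₜ[k] a')) := by
    intro a b a' b'
    rw [hm]
    simp only [LinearMap.coe_comp, Function.comp_apply, LinearEquiv.coe_coe,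
      TensorProduct.assoc_tmul, TensorProduct.map_tmul, TensorProduct.assoc_symm_tmul,
      LinearMap.id_coe, id_eq]
    generalize R (b ⊗ₜ[k] a') = T
    induction T using TensorProduct.induction_on with
    | zero => simp
    | tmul u v =>
      simp [TensorProduct.assoc_tmul, TensorProduct.assoc_symm_tmul]
    | add x y hx hy =>
      simp only [TensorProduct.add_tmul, TensorProduct.tmul_add, map_add, hx, hy]
  refine ⟨?_, ?_, ?_, ?_⟩
  · ext a b
    simp [hAcomm, hBcomm]
  · ext a b a' b'
    simp only [TensorProduct.AlgebraTensorModule.curry_apply, TensorProduct.curry_apply,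
      LinearMap.coe_restrictScalars, LinearMap.coe_comp, Function.comp_apply,
      LinearEquiv.coe_coe, TensorProduct.map_tmul]
    rw [hm', hm', ← hR1']
    generalize R (b ⊗ₜ[k] a') = T
    induction T using TensorProduct.induction_on with
    | zero => simp
    | tmul u v => simp [hAα, hBα]
    | add x y hx hy => simp only [map_add, hx, hy]
  · ext a b a' b'
    simp only [TensorProduct.AlgebraTensorModule.curry_apply, TensorProduct.curry_apply,
      LinearMap.coe_restrictScalars, LinearMap.coe_comp, Function.comp_apply,
      LinearEquiv.coe_coe, TensorProduct.map_tmul]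
    rw [hm', hm', ← hR2']
    generalize R (b ⊗ₜ[k] a') = T
    induction T using TensorProduct.induction_on with
    | zero => simp
    | tmul u v => simp [hAβ, hBβ]
    | add x y hx hy => simp only [map_add, hx, hy]
  · ext a b a' b' a'' b''
    simp only [TensorProduct.AlgebraTensorModule.curry_apply, TensorProduct.curry_apply,
      LinearMap.coe_restrictScalars, LinearMap.coe_comp, Function.comp_apply,
      LinearEquiv.coe_coe, TensorProduct.assoc_tmul, TensorProduct.map_tmul]
    rw [hm' a' b' a'' b'', hm' a b a' b']
    set Λ : (A ⊗[k] B) ⊗[k] (A ⊗[k] B) →ₗ[k] A ⊗[k] B :=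
      (TensorProduct.map (μA (αA a)) (TensorProduct.lift (μB.compl₂ (μB.flip b'')))) ∘ₗ
        (TensorProduct.assoc k A B B).toLinearMap ∘ₗ
        (TensorProduct.map Φ (LinearMap.id : B →ₗ[k] B)) ∘ₗ
        (TensorProduct.assoc k (A ⊗[k] B) A B).symm.toLinearMap with hΛ
    set Ρ : (A ⊗[k] B) ⊗[k] (A ⊗[k] B) →ₗ[k] A ⊗[k] B :=
      (TensorProduct.map (TensorProduct.lift (μA ∘ₗ μA a)) (μB.flip (βB b''))) ∘ₗ
        (TensorProduct.assoc k A A B).symm.toLinearMap ∘ₗ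
        (TensorProduct.map (LinearMap.id : A →ₗ[k] A) Ψ) ∘ₗ
        (TensorProduct.assoc k A B (A ⊗[k] B)).toLinearMap with hΡ
    have eL : ∀ t : A ⊗[k] B,
        m ((αA a ⊗ₜ[k] αB b) ⊗ₜ[k] (TensorProduct.map (μA a') (μB.flip b'') t)) =
          Λ (R (b ⊗ₜ[k] a') ⊗ₜ[k] t) := by
      intro t
      induction t using TensorProduct.induction_on with
      | zero => simp
      | tmul u' v' =>
        simp only [TensorProduct.map_tmul, LinearMap.flip_apply]
        rw [hm', hR3']
        simp only [hΛ, LinearMap.coe_comp, Function.comp_apply, LinearEquiv.coe_coe,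
          TensorProduct.assoc_symm_tmul, TensorProduct.map_tmul, LinearMap.id_coe, id_eq]
        generalize Φ (R (b ⊗ₜ[k] a') ⊗ₜ[k] u') = T
        induction T using TensorProduct.induction_on with
        | zero => simp
        | tmul w y => simp [TensorProduct.assoc_tmul]
        | add x y hx hy =>
          simp only [TensorProduct.add_tmul, map_add, hx, hy]
      | add x y hx hy =>
        simp only [map_add, TensorProduct.tmul_add, hx, hy]
    have eR : ∀ t : A ⊗[k] B,
        m ((TensorProduct.map (μA a) (μB.flip b') t) ⊗ₜ[k] (βA a'' ⊗ₜ[k] βB b'')) =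
          Ρ (t ⊗ₜ[k] R (b' ⊗ₜ[k] a'')) := by
      intro t
      induction t using TensorProduct.induction_on with
      | zero => simp
      | tmul u v =>
        simp only [TensorProduct.map_tmul, LinearMap.flip_apply]
        rw [hm', hR4']
        simp only [hΡ, LinearMap.coe_comp, Function.comp_apply, LinearEquiv.coe_coe,
          TensorProduct.assoc_tmul, TensorProduct.map_tmul, LinearMap.id_coe, id_eq]
        generalize Ψ (v ⊗ₜ[k] R (b' ⊗ₜ[k] a'')) = T
        induction T using TensorProduct.induction_on with
        | zero => simp
        | tmul p q => simp [TensorProduct.assoc_symm_tmul]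
        | add x y hx hy =>
          simp only [TensorProduct.tmul_add, map_add, hx, hy]
      | add x y hx hy =>
        simp only [map_add, TensorProduct.add_tmul, hx, hy]
    rw [eL, eR]
    have hΛΡ : Λ = Ρ := by
      ext u v u' v'
      simp only [hΛ, hΡ, hΦ, hΨ, TensorProduct.AlgebraTensorModule.curry_apply,
        TensorProduct.curry_apply, LinearMap.coe_restrictScalars, LinearMap.coe_comp,
        Function.comp_apply, LinearEquiv.coe_coe, TensorProduct.assoc_tmul,
        TensorProduct.assoc_symm_tmul, TensorProduct.map_tmul, LinearMap.id_coe, id_eq]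
      have hZ : R ((αB (βB.symm v)) ⊗ₜ[k] u') =
          TensorProduct.map βA.symm.toLinearMap βB.symm.toLinearMap
            (TensorProduct.map αA.toLinearMap αB.toLinearMap
              (R (v ⊗ₜ[k] αA.symm (βA u')))) := by
        rw [← key v u', ← LinearMap.comp_apply, ← TensorProduct.map_comp]
        simp
      rw [hZ]
      generalize R (v ⊗ₜ[k] αA.symm (βA u')) = W
      induction W using TensorProduct.induction_on with
      | zero => simp
      | tmul p q =>
        simp only [TensorProduct.map_tmul, TensorProduct.assoc_symm_tmul,
          TensorProduct.assoc_tmul, TensorProduct.lift.tmul, LinearMap.coe_comp,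
          Function.comp_apply, LinearEquiv.coe_coe, LinearMap.compl₂_apply,
          LinearMap.flip_apply, LinearEquiv.apply_symm_apply]
        rw [hAassoc, hBassoc, LinearEquiv.apply_symm_apply]
      | add x y hx hy =>
        simp only [map_add, TensorProduct.tmul_add, TensorProduct.add_tmul, hx, hy]
    rw [hΛΡ]
end

section
/- Let (H, μ_H, Δ_H, α_H, β_H, ψ_H, ω_H) be a BiHom-bialgebra and (A, μ_A, α_A, β_A) a left H-module BiHom-algebra with all six structure maps bijective and action h⊗a ↦ h·a. For integers m, n, p, define R_{m,n,p} : H⊗A → A⊗H by R_{m,n,p}(h⊗a) = α_H^m β_H^n ω_H^p(h₁)·β_A⁻¹(a) ⊗ ψ_H⁻¹(h₂). Then R_{m,n,p} is a BiHom-twisting map between A and H. -/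
open scoped TensorProduct
open TensorProduct

section Helpers
variable {k H A : Type*} [Field k] [AddCommGroup H] [Module k H] [AddCommGroup A] [Module k A]

theorem bh_commSymm (f g : H ≃ₗ[k] H) (h : ∀ x, f (g x) = g (f x)) (x : H) :
    f (g.symm x) = g.symm (f x) := by
  apply g.injective
  rw [g.apply_symm_apply, ← h, g.apply_symm_apply]

theorem bh_commZpow (f g : H ≃ₗ[k] H) (h : ∀ x, f (g x) = g (f x)) (z : ℤ) (x : H) :
    f ((g ^ z) x) = (g ^ z) (f x) := by
  have hc : Commute f g := LinearEquiv.ext h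
  exact LinearEquiv.congr_fun (hc.zpow_right z) x

theorem bh_isMulSymm (μ : H →ₗ[k] H →ₗ[k] H) (e : H ≃ₗ[k] H)
    (he : ∀ a b, e (μ a b) = μ (e a) (e b)) (a b : H) :
    e.symm (μ a b) = μ (e.symm a) (e.symm b) := by
  apply e.injective
  rw [e.apply_symm_apply, he, e.apply_symm_apply, e.apply_symm_apply]

theorem bh_isMulPow (μ : H →ₗ[k] H →ₗ[k] H) (e : H ≃ₗ[k] H)
    (he : ∀ a b, e (μ a b) = μ (e a) (e b)) :
    ∀ (n : ℕ) (a b : H), (e ^ n) (μ a b) = μ ((e ^ n) a) ((e ^ n) b) := by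
  intro n
  induction n with
  | zero => intro a b; simp
  | succ n ih =>
    intro a b
    have : e ^ (n + 1) = e * e ^ n := by rw [pow_succ']
    rw [this]
    show e ((e ^ n) (μ a b)) = μ (e ((e ^ n) a)) (e ((e ^ n) b))
    rw [ih, he]

theorem bh_isMulZpow (μ : H →ₗ[k] H →ₗ[k] H) (e : H ≃ₗ[k] H)
    (he : ∀ a b, e (μ a b) = μ (e a) (e b)) :
    ∀ (z : ℤ) (a b : H), (e ^ z) (μ a b) = μ ((e ^ z) a) ((e ^ z) b) := by
  intro z
  cases z with
  | ofNat n => rw [Int.ofNat_eq_coe, zpow_natCast]; exact bh_isMulPow μ e he n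
  | negSucc n =>
    rw [zpow_negSucc]
    show ∀ a b, (e ^ (n+1)).symm (μ a b) = μ ((e ^ (n+1)).symm a) ((e ^ (n+1)).symm b)
    exact bh_isMulSymm μ _ (bh_isMulPow μ e he (n+1))

theorem bh_mapCancel (e : H ≃ₗ[k] H) (t : H ⊗[k] H) :
    TensorProduct.map e.symm.toLinearMap e.symm.toLinearMap
      (TensorProduct.map e.toLinearMap e.toLinearMap t) = t := by
  induction t using TensorProduct.induction_on with
  | zero => simp
  | tmul x y => simp
  | add s t hs ht => simp [hs, ht]

theorem bh_isDeltaSymm (Δ : H →ₗ[k] H ⊗[k] H) (e : H ≃ₗ[k] H)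
    (he : ∀ x, Δ (e x) = TensorProduct.map e.toLinearMap e.toLinearMap (Δ x)) (x : H) :
    Δ (e.symm x) = TensorProduct.map e.symm.toLinearMap e.symm.toLinearMap (Δ x) := by
  have h1 : Δ x = TensorProduct.map e.toLinearMap e.toLinearMap (Δ (e.symm x)) := by
    conv_lhs => rw [← e.apply_symm_apply x, he]
  rw [h1, bh_mapCancel]

theorem bh_isDeltaPow (Δ : H →ₗ[k] H ⊗[k] H) (e : H ≃ₗ[k] H)
    (he : ∀ x, Δ (e x) = TensorProduct.map e.toLinearMap e.toLinearMap (Δ x)) :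
    ∀ (n : ℕ) (x : H), Δ ((e ^ n) x) =
      TensorProduct.map (e ^ n).toLinearMap (e ^ n).toLinearMap (Δ x) := by
  intro n
  induction n with
  | zero => intro x; simp
  | succ n ih =>
    intro x
    have h1 : e ^ (n + 1) = e * e ^ n := by rw [pow_succ']
    rw [h1]
    show Δ (e ((e ^ n) x)) = TensorProduct.map (e * e ^ n).toLinearMap
      (e * e ^ n).toLinearMap (Δ x)
    rw [he, ih, ← LinearMap.comp_apply, ← TensorProduct.map_comp]
    rfl

theorem bh_isDeltaZpow (Δ : H →ₗ[k] H ⊗[k] H) (e : H ≃ₗ[k] H)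
    (he : ∀ x, Δ (e x) = TensorProduct.map e.toLinearMap e.toLinearMap (Δ x)) :
    ∀ (z : ℤ) (x : H), Δ ((e ^ z) x) =
      TensorProduct.map (e ^ z).toLinearMap (e ^ z).toLinearMap (Δ x) := by
  intro z
  cases z with
  | ofNat n => rw [Int.ofNat_eq_coe, zpow_natCast]; exact bh_isDeltaPow Δ e he n
  | negSucc n =>
    rw [zpow_negSucc]
    show ∀ x, Δ ((e ^ (n+1)).symm x) = TensorProduct.map (e ^ (n+1)).symm.toLinearMap
      (e ^ (n+1)).symm.toLinearMap (Δ x)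
    exact bh_isDeltaSymm Δ _ (bh_isDeltaPow Δ e he (n+1))

end Helpers
set_option maxHeartbeats 1600000


open scoped TensorProduct

/-- For a BiHom-bialgebra `H` and a left `H`-module BiHom-algebra `A`, all
structure maps bijective, and integers `m, n, p`, the map
`R_{m,n,p}(h ⊗ a) = α_H^m β_H^n ω_H^p(h₁)·β_A⁻¹(a) ⊗ ψ_H⁻¹(h₂)` is a BiHom-twisting map
between `A` and `H`. -/
theorem smash_type_twisting_map (k H A : Type*) [Field k]
    [AddCommGroup H] [Module k H] [AddCommGroup A] [Module k A]
    (μH : H →ₗ[k] H →ₗ[k] H) (Δ : H →ₗ[k] H ⊗[k] H) (α β ψ ω : H ≃ₗ[k] H)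
    -- BiHom-associative algebra axioms for H
    (hab : ∀ a : H, α (β a) = β (α a))
    (hαm : ∀ a b : H, α (μH a b) = μH (α a) (α b))
    (hβm : ∀ a b : H, β (μH a b) = μH (β a) (β b))
    (hHassoc : ∀ a b c : H, μH (α a) (μH b c) = μH (μH a b) (β c))
    -- BiHom-coassociative coalgebra axioms for H
    (hψω : ∀ a : H, ψ (ω a) = ω (ψ a))
    (hψΔ : (TensorProduct.map ψ.toLinearMap ψ.toLinearMap) ∘ₗ Δ = Δ ∘ₗ ψ.toLinearMap)
    (hωΔ : (TensorProduct.map ω.toLinearMap ω.toLinearMap) ∘ₗ Δ = Δ ∘ₗ ω.toLinearMap)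
    (hcoassoc : (TensorProduct.assoc k H H H).toLinearMap ∘ₗ
      (TensorProduct.map Δ ψ.toLinearMap) ∘ₗ Δ = (TensorProduct.map ω.toLinearMap Δ) ∘ₗ Δ)
    -- BiHom-bialgebra axioms for H
    (hΔmult : Δ ∘ₗ TensorProduct.lift μH =
      (TensorProduct.map (TensorProduct.lift μH) (TensorProduct.lift μH)) ∘ₗ
        (TensorProduct.tensorTensorTensorComm k H H H H).toLinearMap ∘ₗ
        (TensorProduct.map Δ Δ))
    (hαψ : ∀ a : H, α (ψ a) = ψ (α a)) (hαω : ∀ a : H, α (ω a) = ω (α a))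
    (hβψ : ∀ a : H, β (ψ a) = ψ (β a)) (hβω : ∀ a : H, β (ω a) = ω (β a))
    (hαΔ : (TensorProduct.map α.toLinearMap α.toLinearMap) ∘ₗ Δ = Δ ∘ₗ α.toLinearMap)
    (hβΔ : (TensorProduct.map β.toLinearMap β.toLinearMap) ∘ₗ Δ = Δ ∘ₗ β.toLinearMap)
    (hψm : ∀ a b : H, ψ (μH a b) = μH (ψ a) (ψ b))
    (hωm : ∀ a b : H, ω (μH a b) = μH (ω a) (ω b))
    -- BiHom-associative algebra axioms for A
    (μA : A →ₗ[k] A →ₗ[k] A) (αA βA : A ≃ₗ[k] A)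
    (hAcomm : ∀ a : A, αA (βA a) = βA (αA a))
    (hAα : ∀ a b : A, αA (μA a b) = μA (αA a) (αA b))
    (hAβ : ∀ a b : A, βA (μA a b) = μA (βA a) (βA b))
    (hAassoc : ∀ a b c : A, μA (αA a) (μA b c) = μA (μA a b) (βA c))
    -- left H-module axioms
    (act : H →ₗ[k] A →ₗ[k] A)
    (hactα : ∀ (h : H) (a : A), αA (act h a) = act (α h) (αA a))
    (hactβ : ∀ (h : H) (a : A), βA (act h a) = act (β h) (βA a))
    (hactassoc : ∀ (h h' : H) (a : A), act (α h) (act h' a) = act (μH h h') (βA a))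
    -- left H-module BiHom-algebra condition:
    -- h·(aa') = [α⁻¹ω⁻¹(h₁)·a][β⁻¹ψ⁻¹(h₂)·a']
    (hmodalg : (TensorProduct.lift act) ∘ₗ
        (TensorProduct.map (LinearMap.id : H →ₗ[k] H) (TensorProduct.lift μA)) =
      (TensorProduct.lift μA) ∘ₗ
        (TensorProduct.map
          ((TensorProduct.lift act) ∘ₗ
            (TensorProduct.map (α.symm.toLinearMap ∘ₗ ω.symm.toLinearMap)
              (LinearMap.id : A →ₗ[k] A)))
          ((TensorProduct.lift act) ∘ₗ
            (TensorProduct.map (β.symm.toLinearMap ∘ₗ ψ.symm.toLinearMap)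
              (LinearMap.id : A →ₗ[k] A)))) ∘ₗ
        (TensorProduct.tensorTensorTensorComm k H H A A).toLinearMap ∘ₗ
        (TensorProduct.map Δ (LinearMap.id : A ⊗[k] A →ₗ[k] A ⊗[k] A)))
    (m n p : ℤ) :
    ∀ R : H ⊗[k] A →ₗ[k] A ⊗[k] H,
      (R = (TensorProduct.map
            ((TensorProduct.lift act) ∘ₗ
              (TensorProduct.map ((α ^ m * β ^ n * ω ^ p : H ≃ₗ[k] H)).toLinearMap
                βA.symm.toLinearMap))
            ψ.symm.toLinearMap) ∘ₗ
          (TensorProduct.assoc k H A H).symm.toLinearMap ∘ₗ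
          (TensorProduct.map (LinearMap.id : H →ₗ[k] H)
            (TensorProduct.comm k H A).toLinearMap) ∘ₗ
          (TensorProduct.assoc k H H A).toLinearMap ∘ₗ
          (TensorProduct.map Δ (LinearMap.id : A →ₗ[k] A))) →
      (((TensorProduct.map αA.toLinearMap α.toLinearMap) ∘ₗ R =
          R ∘ₗ (TensorProduct.map α.toLinearMap αA.toLinearMap)) ∧
       ((TensorProduct.map βA.toLinearMap β.toLinearMap) ∘ₗ R =
          R ∘ₗ (TensorProduct.map β.toLinearMap βA.toLinearMap)) ∧
       (R ∘ₗ (TensorProduct.map α.toLinearMap (TensorProduct.lift μA)) ∘ₗ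
          (TensorProduct.assoc k H A A).toLinearMap =
        (TensorProduct.map (TensorProduct.lift μA) β.toLinearMap) ∘ₗ
          (TensorProduct.assoc k A A H).symm.toLinearMap ∘ₗ
          (TensorProduct.map (LinearMap.id : A →ₗ[k] A) R) ∘ₗ
          (TensorProduct.assoc k A H A).toLinearMap ∘ₗ
          (TensorProduct.map
            (TensorProduct.map (LinearMap.id : A →ₗ[k] A)
              (α.toLinearMap ∘ₗ β.symm.toLinearMap))
            (LinearMap.id : A →ₗ[k] A)) ∘ₗ
          (TensorProduct.map R (LinearMap.id : A →ₗ[k] A))) ∧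
       (R ∘ₗ (TensorProduct.map (TensorProduct.lift μH) βA.toLinearMap) =
        (TensorProduct.map αA.toLinearMap (TensorProduct.lift μH)) ∘ₗ
          (TensorProduct.assoc k A H H).toLinearMap ∘ₗ
          (TensorProduct.map R (LinearMap.id : H →ₗ[k] H)) ∘ₗ
          (TensorProduct.assoc k H A H).symm.toLinearMap ∘ₗ
          (TensorProduct.map (LinearMap.id : H →ₗ[k] H)
            (TensorProduct.map (αA.symm.toLinearMap ∘ₗ βA.toLinearMap)
              (LinearMap.id : H →ₗ[k] H))) ∘ₗ
          (TensorProduct.map (LinearMap.id : H →ₗ[k] H) R) ∘ₗ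
          (TensorProduct.assoc k H H A).toLinearMap)) := by
  intro R hR
  subst hR
  -- notation
  have happ : ∀ x : H, (α ^ m * β ^ n * ω ^ p : H ≃ₗ[k] H) x
      = (α ^ m) ((β ^ n) ((ω ^ p) x)) := fun _ => rfl
  have hφα : ∀ x : H, (α ^ m * β ^ n * ω ^ p : H ≃ₗ[k] H) (α x)
      = α ((α ^ m * β ^ n * ω ^ p : H ≃ₗ[k] H) x) := by
    intro x
    rw [happ, happ, ← bh_commZpow α ω hαω p x, ← bh_commZpow α β hab n _,
      ← bh_commZpow α α (fun _ => rfl) m _]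
  have hφβ : ∀ x : H, (α ^ m * β ^ n * ω ^ p : H ≃ₗ[k] H) (β x)
      = β ((α ^ m * β ^ n * ω ^ p : H ≃ₗ[k] H) x) := by
    intro x
    rw [happ, happ, ← bh_commZpow β ω hβω p x, ← bh_commZpow β β (fun _ => rfl) n _,
      ← bh_commZpow β α (fun y => (hab y).symm) m _]
  have hφψ : ∀ x : H, (α ^ m * β ^ n * ω ^ p : H ≃ₗ[k] H) (ψ x)
      = ψ ((α ^ m * β ^ n * ω ^ p : H ≃ₗ[k] H) x) := by
    intro x
    rw [happ, happ, ← bh_commZpow ψ ω hψω p x, ← bh_commZpow ψ β (fun y => (hβψ y).symm) n _,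
      ← bh_commZpow ψ α (fun y => (hαψ y).symm) m _]
  have hφω : ∀ x : H, (α ^ m * β ^ n * ω ^ p : H ≃ₗ[k] H) (ω x)
      = ω ((α ^ m * β ^ n * ω ^ p : H ≃ₗ[k] H) x) := by
    intro x
    rw [happ, happ, ← bh_commZpow ω ω (fun _ => rfl) p x, ← bh_commZpow ω β (fun y => (hβω y).symm) n _,
      ← bh_commZpow ω α (fun y => (hαω y).symm) m _]
  have hAαβs : ∀ a : A, αA (βA.symm a) = βA.symm (αA a) := bh_commSymm αA βA hAcomm
  have hAβαs : ∀ a : A, βA (αA.symm a) = αA.symm (βA a) :=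
    bh_commSymm βA αA (fun a => (hAcomm a).symm)
  have hαψs : ∀ y : H, α (ψ.symm y) = ψ.symm (α y) := bh_commSymm α ψ hαψ
  have hβψs : ∀ y : H, β (ψ.symm y) = ψ.symm (β y) := bh_commSymm β ψ hβψ
  have hΔα' : ∀ x : H, Δ (α x) = TensorProduct.map α.toLinearMap α.toLinearMap (Δ x) :=
    fun x => by simpa using (LinearMap.congr_fun hαΔ x).symm
  have hΔβ' : ∀ x : H, Δ (β x) = TensorProduct.map β.toLinearMap β.toLinearMap (Δ x) :=
    fun x => by simpa using (LinearMap.congr_fun hβΔ x).symm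
  have hφm : ∀ a b : H, (α ^ m * β ^ n * ω ^ p : H ≃ₗ[k] H) (μH a b)
      = μH ((α ^ m * β ^ n * ω ^ p : H ≃ₗ[k] H) a) ((α ^ m * β ^ n * ω ^ p : H ≃ₗ[k] H) b) := by
    intro a b
    rw [happ, happ, happ, bh_isMulZpow μH ω hωm p, bh_isMulZpow μH β hβm n,
      bh_isMulZpow μH α hαm m]
  have hψsm : ∀ a b : H, ψ.symm (μH a b) = μH (ψ.symm a) (ψ.symm b) := bh_isMulSymm μH ψ hψm
  have hactαs : ∀ (g : H) (c : A), αA.symm (act g c) = act (α.symm g) (αA.symm c) := by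
    intro g c
    apply αA.injective
    rw [αA.apply_symm_apply, hactα, α.apply_symm_apply, αA.apply_symm_apply]
  have hactβs : ∀ (g : H) (c : A), βA.symm (act g c) = act (β.symm g) (βA.symm c) := by
    intro g c
    apply βA.injective
    rw [βA.apply_symm_apply, hactβ, β.apply_symm_apply, βA.apply_symm_apply]
  have hΔm' : ∀ g g' : H, Δ (μH g g')
      = TensorProduct.map (TensorProduct.lift μH) (TensorProduct.lift μH)
          ((TensorProduct.tensorTensorTensorComm k H H H H) (Δ g ⊗ₜ[k] Δ g')) := by
    intro g g'
    simpa using LinearMap.congr_fun hΔmult (g ⊗ₜ[k] g')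
  have hφωs : ∀ x : H, (α ^ m * β ^ n * ω ^ p : H ≃ₗ[k] H) (ω.symm x)
      = ω.symm ((α ^ m * β ^ n * ω ^ p : H ≃ₗ[k] H) x) := bh_commSymm _ ω hφω
  have hφψs : ∀ x : H, (α ^ m * β ^ n * ω ^ p : H ≃ₗ[k] H) (ψ.symm x)
      = ψ.symm ((α ^ m * β ^ n * ω ^ p : H ≃ₗ[k] H) x) := bh_commSymm _ ψ hφψ
  have hφβs : ∀ x : H, (α ^ m * β ^ n * ω ^ p : H ≃ₗ[k] H) (β.symm x)
      = β.symm ((α ^ m * β ^ n * ω ^ p : H ≃ₗ[k] H) x) := bh_commSymm _ β hφβ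
  have hαωs : ∀ x : H, α (ω.symm x) = ω.symm (α x) := bh_commSymm α ω hαω
  have hαβs : ∀ x : H, α (β.symm x) = β.symm (α x) := bh_commSymm α β hab
  have hψsβ : ∀ x : H, ψ.symm (β x) = β (ψ.symm x) := fun x => (bh_commSymm β ψ hβψ x).symm
  have hψsβs : ∀ x : H, ψ.symm (β.symm x) = β.symm (ψ.symm x) := bh_commSymm ψ.symm β hψsβ
  have hαsβ : ∀ z : H, α.symm (β z) = β (α.symm z) := by
    intro z
    have := bh_commSymm β α (fun x => (hab x).symm) z
    exact this.symm
  refine ⟨?_, ?_, ?_, ?_⟩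
  · -- condition 1
    apply TensorProduct.ext'
    intro h a
    simp only [LinearMap.coe_comp, Function.comp_apply, TensorProduct.map_tmul,
      LinearEquiv.coe_coe, LinearMap.id_coe, id_eq]
    rw [hΔα']
    generalize Δ h = t
    induction t using TensorProduct.induction_on with
    | zero => simp
    | tmul x y =>
      simp only [TensorProduct.map_tmul, TensorProduct.assoc_tmul,
        TensorProduct.assoc_symm_tmul, TensorProduct.comm_tmul, TensorProduct.map_tmul,
        LinearMap.coe_comp, Function.comp_apply, LinearMap.id_coe, id_eq,
        LinearEquiv.coe_coe, TensorProduct.lift.tmul]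
      rw [hactα, hφα, hAαβs, hαψs]
    | add s t hs ht =>
      simp only [map_add, TensorProduct.add_tmul, hs, ht]
  · -- condition 2
    apply TensorProduct.ext'
    intro h a
    simp only [LinearMap.coe_comp, Function.comp_apply, TensorProduct.map_tmul,
      LinearEquiv.coe_coe, LinearMap.id_coe, id_eq]
    rw [hΔβ']
    generalize Δ h = t
    induction t using TensorProduct.induction_on with
    | zero => simp
    | tmul x y =>
      simp only [TensorProduct.map_tmul, TensorProduct.assoc_tmul,
        TensorProduct.assoc_symm_tmul, TensorProduct.comm_tmul, TensorProduct.map_tmul,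
        LinearMap.coe_comp, Function.comp_apply, LinearMap.id_coe, id_eq,
        LinearEquiv.coe_coe, TensorProduct.lift.tmul]
      rw [hactβ, hφβ, hβψs]
      simp
    | add s t hs ht =>
      simp only [map_add, TensorProduct.add_tmul, hs, ht]
  · -- condition 3
    have hΔψ' : ∀ x : H, Δ (ψ x) = TensorProduct.map ψ.toLinearMap ψ.toLinearMap (Δ x) :=
      fun x => by simpa using (LinearMap.congr_fun hψΔ x).symm
    have hΔω' : ∀ x : H, Δ (ω x) = TensorProduct.map ω.toLinearMap ω.toLinearMap (Δ x) :=
      fun x => by simpa using (LinearMap.congr_fun hωΔ x).symm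
    have hΔφα : ∀ x : H, Δ ((α ^ m * β ^ n * ω ^ p : H ≃ₗ[k] H) (α x)) =
        TensorProduct.map (α ^ m : H ≃ₗ[k] H).toLinearMap (α ^ m : H ≃ₗ[k] H).toLinearMap
          (TensorProduct.map (β ^ n : H ≃ₗ[k] H).toLinearMap (β ^ n : H ≃ₗ[k] H).toLinearMap
            (TensorProduct.map (ω ^ p : H ≃ₗ[k] H).toLinearMap (ω ^ p : H ≃ₗ[k] H).toLinearMap
              (TensorProduct.map α.toLinearMap α.toLinearMap (Δ x)))) := by
      intro x
      rw [happ, bh_isDeltaZpow Δ α hΔα' m, bh_isDeltaZpow Δ β hΔβ' n,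
        bh_isDeltaZpow Δ ω hΔω' p, hΔα']
    have hΔαβψ : ∀ y : H, Δ (α (β.symm (ψ.symm y))) =
        TensorProduct.map α.toLinearMap α.toLinearMap
          (TensorProduct.map β.symm.toLinearMap β.symm.toLinearMap
            (TensorProduct.map ψ.symm.toLinearMap ψ.symm.toLinearMap (Δ y))) := by
      intro y
      rw [hΔα', bh_isDeltaSymm Δ β hΔβ', bh_isDeltaSymm Δ ψ hΔψ']
    have hβAsm : ∀ a b : A, βA.symm (μA a b) = μA (βA.symm a) (βA.symm b) :=
      bh_isMulSymm μA βA hAβ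
    have hmod' : ∀ (g : H) (b c : A), act g (μA b c) =
        (TensorProduct.lift μA)
          ((TensorProduct.map
            (TensorProduct.lift act ∘ₗ
              TensorProduct.map (α.symm.toLinearMap ∘ₗ ω.symm.toLinearMap) LinearMap.id)
            (TensorProduct.lift act ∘ₗ
              TensorProduct.map (β.symm.toLinearMap ∘ₗ ψ.symm.toLinearMap) LinearMap.id))
          ((TensorProduct.tensorTensorTensorComm k H H A A) (Δ g ⊗ₜ[k] (b ⊗ₜ[k] c)))) := by
      intro g b c
      simpa using LinearMap.congr_fun hmodalg (g ⊗ₜ[k] (b ⊗ₜ[k] c))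
    have c1 : ∀ u : H, α.symm (ω.symm ((α ^ m * β ^ n * ω ^ p : H ≃ₗ[k] H) (α u)))
        = (α ^ m * β ^ n * ω ^ p : H ≃ₗ[k] H) (ω.symm u) := by
      intro u
      rw [hφα, ← hαωs, α.symm_apply_apply, hφωs]
    have c2 : ∀ v : H, β.symm (ψ.symm ((α ^ m * β ^ n * ω ^ p : H ≃ₗ[k] H) (α v)))
        = (α ^ m * β ^ n * ω ^ p : H ≃ₗ[k] H) (α (β.symm (ψ.symm v))) := by
      intro v
      rw [hφα, hφα, ← hαψs, ← hαβs, hφβs, hφψs]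
    set Φ : (H ⊗[k] (H ⊗[k] H)) ⊗[k] (A ⊗[k] A) →ₗ[k] A ⊗[k] H :=
      TensorProduct.map
        (TensorProduct.lift μA ∘ₗ
          TensorProduct.map
            (TensorProduct.lift act ∘ₗ
              TensorProduct.map
                ((α ^ m * β ^ n * ω ^ p : H ≃ₗ[k] H).toLinearMap ∘ₗ ω.symm.toLinearMap)
                βA.symm.toLinearMap)
            (TensorProduct.lift act ∘ₗ
              TensorProduct.map
                ((α ^ m * β ^ n * ω ^ p : H ≃ₗ[k] H).toLinearMap ∘ₗ α.toLinearMap ∘ₗ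
                  β.symm.toLinearMap ∘ₗ ψ.symm.toLinearMap)
                βA.symm.toLinearMap) ∘ₗ
          (TensorProduct.tensorTensorTensorComm k H H A A).toLinearMap)
        (α.toLinearMap ∘ₗ ψ.symm.toLinearMap ∘ₗ ψ.symm.toLinearMap) ∘ₗ
      (TensorProduct.assoc k (H ⊗[k] H) (A ⊗[k] A) H).symm.toLinearMap ∘ₗ
      TensorProduct.map LinearMap.id (TensorProduct.comm k H (A ⊗[k] A)).toLinearMap ∘ₗ
      (TensorProduct.assoc k (H ⊗[k] H) H (A ⊗[k] A)).toLinearMap ∘ₗ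
      TensorProduct.map (TensorProduct.assoc k H H H).symm.toLinearMap LinearMap.id
      with hΦdef
    have L1 : ∀ (t : H ⊗[k] H) (a a' : A),
        (TensorProduct.map
            (TensorProduct.lift act ∘ₗ
              TensorProduct.map (α ^ m * β ^ n * ω ^ p : H ≃ₗ[k] H).toLinearMap
                βA.symm.toLinearMap)
            ψ.symm.toLinearMap)
          ((TensorProduct.assoc k H A H).symm
            ((TensorProduct.map LinearMap.id (TensorProduct.comm k H A).toLinearMap)
              ((TensorProduct.assoc k H H A)
                ((TensorProduct.map α.toLinearMap α.toLinearMap) t ⊗ₜ[k] μA a a')))) =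
        Φ ((TensorProduct.assoc k H H H) ((TensorProduct.map Δ ψ.toLinearMap) t) ⊗ₜ[k]
            (a ⊗ₜ[k] a')) := by
      intro t a a'
      induction t using TensorProduct.induction_on with
      | zero => simp
      | add u v hu hv =>
        simp only [map_add, TensorProduct.add_tmul, hu, hv]
      | tmul x y =>
        simp only [LinearMap.coe_comp, Function.comp_apply, TensorProduct.map_tmul,
          LinearEquiv.coe_coe, LinearMap.id_coe, id_eq, TensorProduct.lift.tmul,
          TensorProduct.assoc_tmul, TensorProduct.assoc_symm_tmul, TensorProduct.comm_tmul]
        rw [hβAsm, hmod', hΔφα]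
        generalize Δ x = s
        induction s using TensorProduct.induction_on with
        | zero => simp
        | add u v hu hv =>
          simp only [map_add, TensorProduct.add_tmul, TensorProduct.tmul_add, hu, hv]
        | tmul u v =>
          simp only [LinearMap.coe_comp, Function.comp_apply, TensorProduct.map_tmul,
            LinearEquiv.coe_coe, LinearMap.id_coe, id_eq, TensorProduct.lift.tmul,
            TensorProduct.assoc_tmul, TensorProduct.assoc_symm_tmul, TensorProduct.comm_tmul,
            TensorProduct.tensorTensorTensorComm_tmul]
          simp only [hΦdef, LinearMap.coe_comp, Function.comp_apply, TensorProduct.map_tmul,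
            LinearEquiv.coe_coe, LinearMap.id_coe, id_eq, TensorProduct.lift.tmul,
            TensorProduct.assoc_tmul, TensorProduct.assoc_symm_tmul, TensorProduct.comm_tmul,
            TensorProduct.tensorTensorTensorComm_tmul]
          simp only [← happ]
          rw [c1, c2, ψ.symm_apply_apply, hαψs]
    have c4 : ∀ v : H, β (ψ.symm (α (β.symm (ψ.symm v)))) = α (ψ.symm (ψ.symm v)) := by
      intro v
      rw [← hαψs, ← hab, hψsβs, β.apply_symm_apply]
    have L2 : ∀ (t : H ⊗[k] H) (a a' : A),
        (TensorProduct.map (TensorProduct.lift μA) β.toLinearMap)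
          ((TensorProduct.assoc k A A H).symm
            ((TensorProduct.map LinearMap.id
                (TensorProduct.map
                    (TensorProduct.lift act ∘ₗ
                      TensorProduct.map (α ^ m * β ^ n * ω ^ p : H ≃ₗ[k] H).toLinearMap
                        βA.symm.toLinearMap)
                    ψ.symm.toLinearMap ∘ₗ
                  (TensorProduct.assoc k H A H).symm.toLinearMap ∘ₗ
                    TensorProduct.map LinearMap.id (TensorProduct.comm k H A).toLinearMap ∘ₗ
                      (TensorProduct.assoc k H H A).toLinearMap ∘ₗ
                        TensorProduct.map Δ LinearMap.id))
              ((TensorProduct.assoc k A H A)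
                ((TensorProduct.map LinearMap.id (α.toLinearMap ∘ₗ β.symm.toLinearMap))
                    ((TensorProduct.map
                        (TensorProduct.lift act ∘ₗ
                          TensorProduct.map (α ^ m * β ^ n * ω ^ p : H ≃ₗ[k] H).toLinearMap
                            βA.symm.toLinearMap)
                        ψ.symm.toLinearMap)
                      ((TensorProduct.assoc k H A H).symm
                        ((TensorProduct.map LinearMap.id
                            (TensorProduct.comm k H A).toLinearMap)
                          ((TensorProduct.assoc k H H A) (t ⊗ₜ[k] a))))) ⊗ₜ[k]
                  a')))) =
        Φ ((TensorProduct.map ω.toLinearMap Δ) t ⊗ₜ[k] (a ⊗ₜ[k] a')) := by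
      intro t a a'
      induction t using TensorProduct.induction_on with
      | zero => simp
      | add u v hu hv =>
        simp only [map_add, TensorProduct.add_tmul, hu, hv]
      | tmul x y =>
        simp only [LinearMap.coe_comp, Function.comp_apply, TensorProduct.map_tmul,
          LinearEquiv.coe_coe, LinearMap.id_coe, id_eq, TensorProduct.lift.tmul,
          TensorProduct.assoc_tmul, TensorProduct.assoc_symm_tmul, TensorProduct.comm_tmul]
        rw [hΔαβψ]
        generalize Δ y = s
        induction s using TensorProduct.induction_on with
        | zero => simp
        | add u v hu hv =>
          simp only [map_add, TensorProduct.add_tmul, TensorProduct.tmul_add, hu, hv]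
        | tmul u v =>
          simp only [LinearMap.coe_comp, Function.comp_apply, TensorProduct.map_tmul,
            LinearEquiv.coe_coe, LinearMap.id_coe, id_eq, TensorProduct.lift.tmul,
            TensorProduct.assoc_tmul, TensorProduct.assoc_symm_tmul, TensorProduct.comm_tmul,
            TensorProduct.tensorTensorTensorComm_tmul, hΦdef]
          rw [ω.symm_apply_apply, c4]
    apply TensorProduct.ext'
    intro t a'
    induction t using TensorProduct.induction_on with
    | zero => simp
    | add s t hs ht =>
      simp only [map_add, TensorProduct.add_tmul, hs, ht]
    | tmul h a =>
      simp only [LinearMap.coe_comp, Function.comp_apply, TensorProduct.map_tmul,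
        LinearEquiv.coe_coe, LinearMap.id_coe, id_eq, TensorProduct.lift.tmul,
        TensorProduct.assoc_tmul, TensorProduct.assoc_symm_tmul, TensorProduct.comm_tmul]
      rw [hΔα']
      rw [L1 (Δ h) a a', L2 (Δ h) a a']
      have hco : (TensorProduct.assoc k H H H) ((TensorProduct.map Δ ψ.toLinearMap) (Δ h))
          = (TensorProduct.map ω.toLinearMap Δ) (Δ h) := by
        simpa using LinearMap.congr_fun hcoassoc h
      rw [hco]
  · -- condition 4
    apply TensorProduct.ext'
    intro t a
    induction t using TensorProduct.induction_on with
    | zero => simp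
    | add s t hs ht =>
      simp only [map_add, TensorProduct.add_tmul, hs, ht]
    | tmul h h' =>
      simp only [LinearMap.coe_comp, Function.comp_apply, TensorProduct.map_tmul,
        LinearEquiv.coe_coe, LinearMap.id_coe, id_eq, TensorProduct.lift.tmul,
        TensorProduct.assoc_tmul, TensorProduct.assoc_symm_tmul, TensorProduct.comm_tmul]
      rw [hΔm']
      generalize Δ h' = s'
      induction s' using TensorProduct.induction_on with
      | zero => simp
      | add u v hu hv =>
        simp only [map_add, TensorProduct.add_tmul, TensorProduct.tmul_add, hu, hv]
      | tmul x' y' =>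
        simp only [LinearMap.coe_comp, Function.comp_apply, TensorProduct.map_tmul,
          LinearEquiv.coe_coe, LinearMap.id_coe, id_eq, TensorProduct.lift.tmul,
          TensorProduct.assoc_tmul, TensorProduct.assoc_symm_tmul, TensorProduct.comm_tmul]
        generalize Δ h = s
        induction s using TensorProduct.induction_on with
        | zero => simp
        | add u v hu hv =>
          simp only [map_add, TensorProduct.add_tmul, TensorProduct.tmul_add, hu, hv]
        | tmul x y =>
          simp only [LinearMap.coe_comp, Function.comp_apply, TensorProduct.map_tmul,
            LinearEquiv.coe_coe, LinearMap.id_coe, id_eq, TensorProduct.lift.tmul,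
            TensorProduct.assoc_tmul, TensorProduct.assoc_symm_tmul, TensorProduct.comm_tmul,
            TensorProduct.tensorTensorTensorComm_tmul]
          rw [βA.symm_apply_apply, hφm, hψsm, hactβ, βA.apply_symm_apply, hactαs, hαsβ,
            hactβs, β.symm_apply_apply, hactα, hactα, α.apply_symm_apply, hAαβs,
            αA.apply_symm_apply, hactassoc, βA.apply_symm_apply]
end
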